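/- arXiv:2302.11543 — 8 statements merged into one kernel-verified Lean document; each statement's English description precedes it below -/
import Mathlib

section
/- Let 1 < ρ < ∞ and let ω be a weight on ℝ^n such that ω^{−1/(ρ−1)} is locally integrable and for some constant C₀ and every ball B, (|B|^{−1}∫_B ω)·(|B|^{−1}∫_B ω^{−1/(ρ−1)})^{ρ−1} ≤ C₀. Then log ω is locally integrable and for every ball B, ∫_B ω ≤ C₀ |B| · exp(|B|^{−1}∫_B log ω) (the reverse Jensen inequality). -/
open MeasureTheory Metric ENNReal

noncomputable section

/-- Euclidean space `ℝ^n`. -/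
abbrev Rn (n : ℕ) : Type := EuclideanSpace ℝ (Fin n)

/-- A weight on `ℝ^n`: a measurable, everywhere positive, locally integrable function. -/
def IsWeight {n : ℕ} (w : Rn n → ℝ) : Prop :=
  Measurable w ∧ (∀ x, 0 < w x) ∧ LocallyIntegrable w volume

/-- The weighted measure `w(E) = ∫_E w` of a set `E`, as an extended nonnegative real. -/
def wtMass {n : ℕ} (w : Rn n → ℝ) (E : Set (Rn n)) : ℝ≥0∞ :=
  ∫⁻ x in E, ENNReal.ofReal (w x)

/-- The weighted `L^p` norm of `f` restricted to a set `E`: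
`(∫_E |f|^p w)^(1/p)`. -/
def wtLpOn {n : ℕ} (p : ℝ) (w : Rn n → ℝ) (E : Set (Rn n)) (f : Rn n → ℝ) : ℝ≥0∞ :=
  (∫⁻ x in E, ENNReal.ofReal |f x| ^ p * ENNReal.ofReal (w x)) ^ (1 / p)

/-- The weighted `L^p` norm `‖f‖_{L^p(w)}` on all of `ℝ^n`. -/
def wtLp {n : ℕ} (p : ℝ) (w : Rn n → ℝ) (f : Rn n → ℝ) : ℝ≥0∞ :=
  wtLpOn p w Set.univ f

/-- The weighted weak `L^p` quasinorm of `f` restricted to a set `E`: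
`sup_{t>0} t · w({x ∈ E : |f x| > t})^(1/p)`. -/
def wtWLpOn {n : ℕ} (p : ℝ) (w : Rn n → ℝ) (E : Set (Rn n)) (f : Rn n → ℝ) : ℝ≥0∞ :=
  ⨆ (t : ℝ) (_ : 0 < t), ENNReal.ofReal t * wtMass w {x ∈ E | t < |f x|} ^ (1 / p)

/-- The weighted weak `L^p` quasinorm `‖f‖_{WL^p(w)}` on all of `ℝ^n`. -/
def wtWLp {n : ℕ} (p : ℝ) (w : Rn n → ℝ) (f : Rn n → ℝ) : ℝ≥0∞ :=
  wtWLpOn p w Set.univ f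

/-- The weighted amalgam norm `‖f‖_{(L^p,L^q)^α(w;μ)}`. -/
def amalgamNorm {n : ℕ} (p q α : ℝ) (w μ : Rn n → ℝ) (f : Rn n → ℝ) : ℝ≥0∞ :=
  ⨆ (r : ℝ) (_ : 0 < r),
    (∫⁻ y, (wtMass w (ball y r) ^ (1/α - 1/p - 1/q) * wtLpOn p w (ball y r) f) ^ q *
      ENNReal.ofReal (μ y)) ^ (1/q)

/-- The weighted weak amalgam norm `‖f‖_{(WL^p,L^q)^α(w;μ)}`. -/
def wAmalgamNorm {n : ℕ} (p q α : ℝ) (w μ : Rn n → ℝ) (f : Rn n → ℝ) : ℝ≥0∞ :=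
  ⨆ (r : ℝ) (_ : 0 < r),
    (∫⁻ y, (wtMass w (ball y r) ^ (1/α - 1/p - 1/q) * wtWLpOn p w (ball y r) f) ^ q *
      ENNReal.ofReal (μ y)) ^ (1/q)

/-- The product weight `ν_{w⃗} = ∏_k w_k^{p/p_k}`. -/
def nuW {n m : ℕ} (p : ℝ) (pk : Fin m → ℝ) (w : Fin m → Rn n → ℝ) : Rn n → ℝ :=
  fun x => ∏ k, w k x ^ (p / pk k)

/-- The `k`-th factor in the multilinear `A_{P⃗}` condition on a set `B`:
`(|B|⁻¹ ∫_B w^{-p'/p})^{1/p'}` when `p > 1` (note `p'/p = 1/(p-1)` and `1/p' = (p-1)/p`),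
and `(essinf_B w)⁻¹` when `p = 1`. -/
def apFactor {n : ℕ} (pk : ℝ) (w : Rn n → ℝ) (B : Set (Rn n)) : ℝ≥0∞ :=
  if pk = 1 then (essInf (fun x => ENNReal.ofReal (w x)) (volume.restrict B))⁻¹
  else ((volume B)⁻¹ * ∫⁻ x in B, ENNReal.ofReal (w x ^ (-(1 / (pk - 1))))) ^ ((pk - 1) / pk)

/-- The multilinear `A_{P⃗}` condition with constant `CW`. -/
def MultiAP {n m : ℕ} (p : ℝ) (pk : Fin m → ℝ) (w : Fin m → Rn n → ℝ) (CW : ℝ) : Prop :=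
  ∀ (y : Rn n) (r : ℝ), 0 < r →
    ((volume (ball y r))⁻¹ * wtMass (nuW p pk w) (ball y r)) ^ (1/p) *
      (∏ k, apFactor (pk k) (w k) (ball y r)) ≤ ENNReal.ofReal CW

/-- The `A_∞`-comparison condition with constants `Cc`, `δ`. -/
def AinfCompare {n : ℕ} (w : Rn n → ℝ) (Cc δ : ℝ) : Prop :=
  ∀ (y : Rn n) (r : ℝ), 0 < r → ∀ E : Set (Rn n), MeasurableSet E → E ⊆ ball y r →
    wtMass w E ≤ ENNReal.ofReal Cc * (volume E / volume (ball y r)) ^ δ * wtMass w (ball y r)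

/-- Doubling condition with constant `Cd`. -/
def DoublingWt {n : ℕ} (w : Rn n → ℝ) (Cd : ℝ) : Prop :=
  ∀ (y : Rn n) (r : ℝ), 0 < r →
    wtMass w (ball y (2*r)) ≤ ENNReal.ofReal Cd * wtMass w (ball y r)

/-- Reverse Jensen inequality with constant `CJ`. -/
def RevJensen {n : ℕ} (w : Rn n → ℝ) (CJ : ℝ) : Prop :=
  LocallyIntegrable (fun x => Real.log (w x)) volume ∧
  ∀ (y : Rn n) (r : ℝ), 0 < r →
    (∫ x in ball y r, w x) ≤
      CJ * (volume (ball y r)).toReal *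
        Real.exp ((volume (ball y r)).toReal⁻¹ * ∫ x in ball y r, Real.log (w x))

/-- `T` is a.e. `m`-linear. -/
def AEMultilinear {n m : ℕ} (T : (Fin m → Rn n → ℝ) → Rn n → ℝ) : Prop :=
  ∀ g : Fin m → Rn n → ℝ, (∀ k, Measurable (g k)) →
    ∀ (k : Fin m) (c : ℝ) (h : Rn n → ℝ), Measurable h →
      ∀ᵐ x ∂(volume : Measure (Rn n)),
        T (Function.update g k (fun y => c * g k y + h y)) x =
          c * T g x + T (Function.update g k h) x

/-- The complement of the essential support of `g`: the union of all open sets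
on which `g` vanishes almost everywhere. -/
def essSuppCompl {n : ℕ} (g : Rn n → ℝ) : Set (Rn n) :=
  {x | ∃ U : Set (Rn n), IsOpen U ∧ x ∈ U ∧ ∀ᵐ y ∂(volume.restrict U), g y = 0}

/-- The multilinear size property with constant `A`: for a.e. `x` outside the essential
support of one of the entries, `|T(g⃗)(x)|` is dominated by the standard multilinear
fractional kernel applied to `|g_k|`. -/
def SizeProp {n m : ℕ} (T : (Fin m → Rn n → ℝ) → Rn n → ℝ) (A : ℝ) : Prop :=
  ∀ g : Fin m → Rn n → ℝ, (∀ k, Measurable (g k)) → ∀ k₀ : Fin m,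
    ∀ᵐ x ∂(volume.restrict (essSuppCompl (g k₀))),
      ENNReal.ofReal |T g x| ≤ ENNReal.ofReal A *
        ∫⁻ z : Fin m → Rn n,
          (∏ k, ENNReal.ofReal |g k (z k)|) /
            ENNReal.ofReal ((∑ k, dist x (z k)) ^ (m * n))

/-- `b_B`: the average of `b` over the ball `B(y,r)`. -/
def ballAvg {n : ℕ} (b : Rn n → ℝ) (y : Rn n) (r : ℝ) : ℝ :=
  (volume (ball y r)).toReal⁻¹ * ∫ x in ball y r, b x

/-- The BMO seminorm of `b` is bounded by `M`. -/
def BMOBound {n : ℕ} (b : Rn n → ℝ) (M : ℝ) : Prop :=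
  ∀ (y : Rn n) (r : ℝ), 0 < r →
    (volume (ball y r)).toReal⁻¹ * (∫ x in ball y r, |b x - ballAvg b y r|) ≤ M

/-- The commutator `[b,T]_k` in the `k`-th slot. -/
def commAt {n m : ℕ} (b : Rn n → ℝ) (k : Fin m)
    (T : (Fin m → Rn n → ℝ) → Rn n → ℝ) : (Fin m → Rn n → ℝ) → Rn n → ℝ :=
  fun f x => b x * T f x - T (Function.update f k (fun y => b y * f k y)) x

/-- The multilinear commutator `[Σb⃗, T] = Σ_k [b_k,T]_k`. -/
def sumComm {n m : ℕ} (b : Fin m → Rn n → ℝ)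
    (T : (Fin m → Rn n → ℝ) → Rn n → ℝ) : (Fin m → Rn n → ℝ) → Rn n → ℝ :=
  fun f x => ∑ k, commAt (b k) k T f x

/-- The iterated commutator `[Πb⃗, T] = [b_1,[b_2,…[b_{m-1},[b_m,T]_m]_{m-1}…]_2]_1`. -/
def iterComm {n m : ℕ} (b : Fin m → Rn n → ℝ)
    (T : (Fin m → Rn n → ℝ) → Rn n → ℝ) : (Fin m → Rn n → ℝ) → Rn n → ℝ :=
  (List.finRange m).foldr (fun k S => commAt (b k) k S) T

/-- `Φ(t) = t(1 + log⁺ t)`. -/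
def phiLL (t : ℝ) : ℝ := t * (1 + max (Real.log t) 0)

/-- The `L log L` Luxemburg norm of `f` over `B` with respect to the weight `w`:
`inf {σ > 0 : w(B)⁻¹ ∫_B Φ(|f|/σ) w ≤ 1}` (equal to `⊤` if no such `σ` exists). -/
def llogLOn {n : ℕ} (w : Rn n → ℝ) (B : Set (Rn n)) (f : Rn n → ℝ) : ℝ≥0∞ :=
  sInf {σ : ℝ≥0∞ | ∃ s : ℝ, 0 < s ∧ σ = ENNReal.ofReal s ∧
    (wtMass w B)⁻¹ *
      (∫⁻ x in B, ENNReal.ofReal (phiLL (|f x| / s)) * ENNReal.ofReal (w x)) ≤ 1}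

/-- The weighted amalgam norm of `L log L` type, `‖f‖_{(L log L, L^q)^α(w;μ)}`. -/
def llogLAmalgam {n : ℕ} (q α : ℝ) (w μ : Rn n → ℝ) (f : Rn n → ℝ) : ℝ≥0∞ :=
  ⨆ (r : ℝ) (_ : 0 < r),
    (∫⁻ y, (wtMass w (ball y r) ^ (1/α - 1/q) * llogLOn w (ball y r) f) ^ q *
      ENNReal.ofReal (μ y)) ^ (1/q)

/-- Reverse Hölder inequality with exponent `s` and constant `CR`. -/
def RevHolder {n : ℕ} (w : Rn n → ℝ) (s CR : ℝ) : Prop :=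
  ∀ (y : Rn n) (r : ℝ), 0 < r →
    ((volume (ball y r))⁻¹ * ∫⁻ x in ball y r, ENNReal.ofReal (w x ^ s)) ^ (1/s) ≤
      ENNReal.ofReal CR * ((volume (ball y r))⁻¹ * wtMass w (ball y r))

/-!
Since `log t ≤ t` and `-log t ≤ p t^(-1/p)` (both from `log s ≤ s - 1`), `|log ω|` is dominated by
`ω + (ρ-1) ω^(-1/(ρ-1))`, which is locally integrable. On a ball, Jensen's inequality for `exp`
gives `exp(-⨍ log ω) ≤ (⨍ ω^(-1/(ρ-1)))^(ρ-1)`, so the `A_ρ` bound yields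
`⨍ ω · exp(-⨍ log ω) ≤ C₀`.
-/

open Real in
theorem abs_log_le_add_mul_rpow_neg_inv {t : ℝ} (ht : 0 < t) {p : ℝ} (hp : 0 < p) :
    |log t| ≤ t + p * t ^ (-(1 / p)) := by
  have hlog_le : log t ≤ t := (log_le_sub_one_of_pos ht).trans (by linarith)
  have hneg_log_le : -log t ≤ p * t ^ (-(1 / p)) := by
    have h := log_le_sub_one_of_pos (rpow_pos_of_pos ht (-(1 / p)))
    rw [log_rpow ht] at h
    calc -log t = p * (-(1 / p) * log t) := by field_simp
      _ ≤ p * t ^ (-(1 / p)) := by gcongr; linarith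
  have hrpow : 0 ≤ p * t ^ (-(1 / p)) := by positivity
  exact abs_le.2 ⟨by linarith, by linarith⟩

theorem MeasureTheory.LocallyIntegrable.log_of_rpow_neg_inv {X : Type*} [MeasurableSpace X]
    [TopologicalSpace X] {μ : Measure X} {w : X → ℝ} (hw : Measurable w) (hpos : ∀ x, 0 < w x)
    (hloc : LocallyIntegrable w μ) {p : ℝ} (hp : 0 < p)
    (hdual : LocallyIntegrable (fun x => w x ^ (-(1 / p))) μ) :
    LocallyIntegrable (fun x => Real.log (w x)) μ := by
  refine (hloc.add (hdual.smul p)).mono hw.log.aestronglyMeasurable (ae_of_all _ fun x => ?_)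
  rw [Real.norm_eq_abs, Real.norm_eq_abs]
  exact (abs_log_le_add_mul_rpow_neg_inv (hpos x) hp).trans (le_abs_self _)

section Average

variable {α : Type*} [MeasurableSpace α] {μ : Measure α} [IsFiniteMeasure μ] [NeZero μ]
  {w : α → ℝ} {p : ℝ}

/-- Jensen's inequality for `exp`, applied to `-(1/p) log w`. -/
theorem exp_neg_average_log_le_average_rpow_neg_inv_rpow (hpos : ∀ x, 0 < w x) (hp : 0 < p)
    (hlog : Integrable (fun x => Real.log (w x)) μ)
    (hdual : Integrable (fun x => w x ^ (-(1 / p))) μ) :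
    Real.exp (-⨍ x, Real.log (w x) ∂μ) ≤ (⨍ x, w x ^ (-(1 / p)) ∂μ) ^ p := by
  have hexp : ∀ x, Real.exp (-(1 / p) * Real.log (w x)) = w x ^ (-(1 / p)) := fun x => by
    rw [Real.rpow_def_of_pos (hpos x), mul_comm]
  have hjensen : Real.exp (⨍ x, -(1 / p) * Real.log (w x) ∂μ) ≤ ⨍ x, w x ^ (-(1 / p)) ∂μ := by
    simpa only [hexp] using
      convexOn_exp.map_average_le (f := fun x => -(1 / p) * Real.log (w x))
        Real.continuous_exp.continuousOn isClosed_univ (ae_of_all _ fun _ => Set.mem_univ _)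
        (hlog.const_mul _)
        (by simpa only [Function.comp_def, hexp] using hdual)
  have havg : ⨍ x, -(1 / p) * Real.log (w x) ∂μ = -(1 / p) * ⨍ x, Real.log (w x) ∂μ := by
    simp only [average, integral_const_mul]
  calc Real.exp (-⨍ x, Real.log (w x) ∂μ)
      = Real.exp (-(1 / p) * ⨍ x, Real.log (w x) ∂μ) ^ p := by
        rw [← Real.exp_mul]; congr 1; field_simp
    _ ≤ (⨍ x, w x ^ (-(1 / p)) ∂μ) ^ p := by
        rw [← havg]; gcongr

theorem average_le_mul_exp_average_log (hpos : ∀ x, 0 < w x) (hp : 0 < p)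
    (hlog : Integrable (fun x => Real.log (w x)) μ)
    (hdual : Integrable (fun x => w x ^ (-(1 / p))) μ) {C : ℝ}
    (hA : (⨍ x, w x ∂μ) * (⨍ x, w x ^ (-(1 / p)) ∂μ) ^ p ≤ C) :
    ⨍ x, w x ∂μ ≤ C * Real.exp (⨍ x, Real.log (w x) ∂μ) := by
  set L := ⨍ x, Real.log (w x) ∂μ
  have hW : 0 ≤ ⨍ x, w x ∂μ := by
    simp only [average]; exact integral_nonneg fun x => (hpos x).le
  have hW_exp : (⨍ x, w x ∂μ) * Real.exp (-L) ≤ C :=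
    (mul_le_mul_of_nonneg_left
      (exp_neg_average_log_le_average_rpow_neg_inv_rpow hpos hp hlog hdual) hW).trans hA
  calc ⨍ x, w x ∂μ = (⨍ x, w x ∂μ) * Real.exp (-L) * Real.exp L := by
        rw [mul_assoc, ← Real.exp_add, neg_add_cancel, Real.exp_zero, mul_one]
    _ ≤ C * Real.exp L := by gcongr

end Average

/-- an `A_ρ` weight satisfies the reverse Jensen inequality with the same
constant; in particular `log ω` is locally integrable. -/
theorem Ap_implies_reverse_Jensen
    {n : ℕ} (ρ : ℝ) (hρ : 1 < ρ) (ω : Rn n → ℝ) (hω : IsWeight ω)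
    (hdual : LocallyIntegrable (fun x => ω x ^ (-(1/(ρ-1)))) volume)
    (C₀ : ℝ)
    (hA : ∀ (y : Rn n) (r : ℝ), 0 < r →
      ((volume (ball y r)).toReal⁻¹ * ∫ x in ball y r, ω x) *
        ((volume (ball y r)).toReal⁻¹ * ∫ x in ball y r, ω x ^ (-(1/(ρ-1)))) ^ (ρ - 1)
        ≤ C₀) :
    LocallyIntegrable (fun x => Real.log (ω x)) volume ∧
    ∀ (y : Rn n) (r : ℝ), 0 < r →
      (∫ x in ball y r, ω x) ≤
        C₀ * (volume (ball y r)).toReal *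
          Real.exp ((volume (ball y r)).toReal⁻¹ * ∫ x in ball y r, Real.log (ω x)) := by
  obtain ⟨hmeas, hpos, hloc⟩ := hω
  have hp : 0 < ρ - 1 := sub_pos.2 hρ
  have hlog := hloc.log_of_rpow_neg_inv hmeas hpos hp hdual
  refine ⟨hlog, fun y r hr => ?_⟩
  have hB : volume (ball y r) ≠ 0 := (measure_ball_pos _ _ hr).ne'
  have : NeZero (volume.restrict (ball y r)) := ⟨by simpa using hB⟩
  have : IsFiniteMeasure (volume.restrict (ball y r)) :=
    isFiniteMeasure_restrict.2 measure_ball_lt_top.ne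
  have hV : 0 < (volume (ball y r)).toReal := ENNReal.toReal_pos hB measure_ball_lt_top.ne
  have onBall {f : Rn n → ℝ} (hf : LocallyIntegrable f volume) : IntegrableOn f (ball y r) :=
    (hf.integrableOn_isCompact (isCompact_closedBall y r)).mono_set ball_subset_closedBall
  have hAvg := average_le_mul_exp_average_log hpos hp (onBall hlog) (onBall hdual)
    (by simpa only [setAverage_eq, measureReal_def, smul_eq_mul] using hA y r hr)
  simp only [setAverage_eq, measureReal_def, smul_eq_mul] at hAvg
  rw [inv_mul_le_iff₀ hV] at hAvg
  linarith
end
end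

section
/- Let m ≥ 1 and for k=1,…,m let 1 ≤ p_k ≤ α_k < q_k < ∞; set 1/p = Σ 1/p_k, 1/q = Σ 1/q_k, 1/α = Σ 1/α_k, and assume the balance condition p_1(1/α_1 − 1/q_1) = ⋯ = p_m(1/α_m − 1/q_m). Then for each k, 1/p_k + 1/q_k − 1/α_k = (p/p_k)(1/p + 1/q − 1/α) > 0; moreover, if w_1,…,w_m are weights each satisfying the reverse Jensen inequality with constant C_J and ν = Π_k w_k^{p/p_k}, then there is a constant C, depending only on C_J and the exponents, such that for every ball B, Π_{k=1}^m w_k(B)^{1/p_k + 1/q_k − 1/α_k} ≤ C · ν(B)^{1/p + 1/q − 1/α}. -/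
open MeasureTheory Metric ENNReal

noncomputable section

/-!
Under the balance condition `p_k (1/α_k - 1/q_k) = c`, the exponent `1/p_k + 1/q_k - 1/α_k`
equals `(1 - c)/p_k`; summing, `β = 1/p + 1/q - 1/α = (1 - c)/p`, so the exponents are
`(p/p_k) β` with `∑ p/p_k = 1`. The weight inequality is therefore the `β`-th power of
`∏ w_k(B)^{p/p_k} ≤ C_J ν(B)`. Reverse Jensen bounds each `w_k(B)` by `C_J |B| exp(⨍_B log w_k)`;
the geometric mean is multiplicative, so the product of these bounds is `C_J |B| exp(⨍_B log ν)`,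
and Jensen's inequality for `exp` bounds that by `C_J ν(B)`.
-/

section Exponents

theorem one_div_add_one_div_sub_one_div_pos {a b c : ℝ} (ha : 0 < a) (hac : a ≤ c)
    (hcb : c < b) : 0 < 1/a + 1/b - 1/c := by
  have hb : 0 < 1/b := one_div_pos.mpr (ha.trans_le hac |>.trans hcb)
  linarith [one_div_le_one_div_of_le ha hac]

variable {ι : Type*} [Fintype ι] {p q α : ℝ} {pk qk αk : ι → ℝ}

theorem one_div_add_one_div_sub_one_div_eq_sum (hp : 1/p = ∑ k, 1/pk k)
    (hq : 1/q = ∑ k, 1/qk k) (hα : 1/α = ∑ k, 1/αk k) :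
    1/p + 1/q - 1/α = ∑ k, (1/pk k + 1/qk k - 1/αk k) := by
  rw [hp, hq, hα, Finset.sum_sub_distrib, Finset.sum_add_distrib]

theorem pos_of_one_div_eq_sum [Nonempty ι] (hpk : ∀ k, 0 < pk k) (hp : 1/p = ∑ k, 1/pk k) :
    0 < p :=
  one_div_pos.mp (hp ▸ Finset.sum_pos (fun k _ => one_div_pos.mpr (hpk k)) Finset.univ_nonempty)

theorem sum_div_eq_one_of_one_div_eq_sum (hp0 : p ≠ 0) (hp : 1/p = ∑ k, 1/pk k) :
    ∑ k, p / pk k = 1 := by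
  simp_rw [div_eq_mul_one_div p, ← Finset.mul_sum, ← hp, mul_one_div_cancel hp0]

theorem one_div_add_one_div_sub_one_div_eq_of_balance (hpk : ∀ k, 0 < pk k)
    (hp : 1/p = ∑ k, 1/pk k) (hq : 1/q = ∑ k, 1/qk k) (hα : 1/α = ∑ k, 1/αk k) {c : ℝ}
    (hbal : ∀ k, pk k * (1/αk k - 1/qk k) = c) (k : ι) :
    1/pk k + 1/qk k - 1/αk k = (p / pk k) * (1/p + 1/q - 1/α) := by
  have hsplit : ∀ j, 1/pk j + 1/qk j - 1/αk j = (1 - c) * (1/pk j) := fun j => by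
    rw [← hbal j]
    field_simp [(hpk j).ne']
    ring
  have : Nonempty ι := ⟨k⟩
  have hp0 := (pos_of_one_div_eq_sum hpk hp).ne'
  rw [one_div_add_one_div_sub_one_div_eq_sum hp hq hα, Finset.sum_congr rfl fun j _ => hsplit j,
    ← Finset.mul_sum, ← hp, hsplit k]
  field_simp

end Exponents

section GeometricMean

theorem Real.prod_mul_rpow_of_sum_eq_one {ι : Type*} {s : Finset ι} {a : ℝ} {b t : ι → ℝ}
    (ha : 0 ≤ a) (hb : ∀ k ∈ s, 0 ≤ b k) (ht : ∀ k ∈ s, 0 ≤ t k) (hsum : ∑ k ∈ s, t k = 1) :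
    ∏ k ∈ s, (a * b k) ^ t k = a * ∏ k ∈ s, b k ^ t k := by
  rw [Finset.prod_congr rfl fun k hk => Real.mul_rpow ha (hb k hk), Finset.prod_mul_distrib,
    ← Real.rpow_sum_of_nonneg ha ht, hsum, Real.rpow_one]

theorem Real.log_prod_rpow {ι : Type*} {s : Finset ι} {f t : ι → ℝ} (hf : ∀ k ∈ s, 0 < f k) :
    Real.log (∏ k ∈ s, f k ^ t k) = ∑ k ∈ s, t k * Real.log (f k) := by
  rw [Real.log_prod fun k hk => (Real.rpow_pos_of_pos (hf k hk) _).ne']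
  exact Finset.sum_congr rfl fun k hk => Real.log_rpow (hf k hk) _

variable {n : ℕ}

theorem IsWeight.wtMass_eq_ofReal_integral {w : Rn n → ℝ} (hw : IsWeight w) {B : Set (Rn n)}
    (hB : Bornology.IsBounded B) : wtMass w B = ENNReal.ofReal (∫ x in B, w x) :=
  (ofReal_integral_eq_lintegral_ofReal (hw.2.2.integrableOn_isCompact hB.isCompact_closure
    |>.mono_set subset_closure) (.of_forall fun x => (hw.2.1 x).le)).symm

/-- The mass of `B` for the constant weight equal to the geometric mean of `f` on `B`. -/
def geomMass (f : Rn n → ℝ) (B : Set (Rn n)) : ℝ :=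
  (volume B).toReal * Real.exp ((volume B).toReal⁻¹ * ∫ x in B, Real.log (f x))

theorem geomMass_nonneg (f : Rn n → ℝ) (B : Set (Rn n)) : 0 ≤ geomMass f B := by
  unfold geomMass
  positivity

theorem RevJensen.wtMass_ball_le {w : Rn n → ℝ} {CJ : ℝ} (hJ : RevJensen w CJ)
    (hw : IsWeight w) (y : Rn n) {r : ℝ} (hr : 0 < r) :
    wtMass w (ball y r) ≤ ENNReal.ofReal (CJ * geomMass w (ball y r)) := by
  rw [hw.wtMass_eq_ofReal_integral isBounded_ball, geomMass, ← mul_assoc]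
  exact ENNReal.ofReal_le_ofReal (hJ.2 y r hr)

theorem IsWeight.integral_ball_pos {w : Rn n → ℝ} (hw : IsWeight w) (y : Rn n) {r : ℝ}
    (hr : 0 < r) : 0 < ∫ x in ball y r, w x := by
  have hpos := hw.2.1
  rw [setIntegral_pos_iff_support_of_nonneg_ae (.of_forall fun x => (hpos x).le)
    (hw.2.2.integrableOn_isCompact (isCompact_closedBall y r) |>.mono_set ball_subset_closedBall),
    Function.support_eq_univ fun x => (hpos x).ne', Set.univ_inter]
  exact measure_ball_pos volume y hr

theorem RevJensen.pos {w : Rn n → ℝ} {CJ : ℝ} (hJ : RevJensen w CJ) (hw : IsWeight w) :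
    0 < CJ := by
  have hV : 0 < (volume (ball (0 : Rn n) 1)).toReal :=
    ENNReal.toReal_pos (measure_ball_pos volume 0 one_pos).ne' measure_ball_lt_top.ne
  have h := (hw.integral_ball_pos 0 one_pos).trans_le (hJ.2 0 1 one_pos)
  rw [mul_assoc] at h
  exact pos_of_mul_pos_left h (by positivity)

/-- Jensen's inequality for the convex function `exp`, applied to `log f`. -/
theorem ofReal_geomMass_le_wtMass {f : Rn n → ℝ} (hf : ∀ x, 0 < f x) {B : Set (Rn n)}
    (h0 : volume B ≠ 0) (htop : volume B ≠ ⊤)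
    (hlog : IntegrableOn (fun x => Real.log (f x)) B) :
    ENNReal.ofReal (geomMass f B) ≤ wtMass f B := by
  have hexp : ∀ x, Real.exp (Real.log (f x)) = f x := fun x => Real.exp_log (hf x)
  by_cases hfin : wtMass f B = ⊤
  · simp [hfin]
  have hint : IntegrableOn f B := by
    refine ⟨?_, ?_⟩
    · simpa only [hexp] using Real.continuous_exp.comp_aestronglyMeasurable hlog.1
    · rw [hasFiniteIntegral_iff_ofReal (.of_forall fun x => (hf x).le)]
      exact lt_top_iff_ne_top.mpr hfin
  have hV : 0 < (volume B).toReal := ENNReal.toReal_pos h0 htop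
  have jensen := convexOn_exp.map_set_average_le Real.continuous_exp.continuousOn isClosed_univ
    h0 htop (.of_forall fun _ => Set.mem_univ _) hlog (by simpa only [Function.comp_def, hexp])
  simp only [setAverage_eq, measureReal_def, smul_eq_mul, hexp] at jensen
  rw [wtMass, ← ofReal_integral_eq_lintegral_ofReal hint (.of_forall fun x => (hf x).le)]
  refine ENNReal.ofReal_le_ofReal ?_
  calc geomMass f B ≤ (volume B).toReal * ((volume B).toReal⁻¹ * ∫ x in B, f x) :=
        mul_le_mul_of_nonneg_left jensen hV.le
    _ = ∫ x in B, f x := by field_simp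

variable {ι : Type*} [Fintype ι]

theorem integral_log_prod_rpow {f : ι → Rn n → ℝ} (hf : ∀ k x, 0 < f k x) {B : Set (Rn n)}
    (hlog : ∀ k, IntegrableOn (fun x => Real.log (f k x)) B) (t : ι → ℝ) :
    IntegrableOn (fun x => Real.log (∏ k, f k x ^ t k)) B ∧
      ∫ x in B, Real.log (∏ k, f k x ^ t k) = ∑ k, t k * ∫ x in B, Real.log (f k x) := by
  simp_rw [Real.log_prod_rpow fun k _ => hf k _]
  refine ⟨integrable_finsetSum _ fun k _ => (hlog k).const_mul _, ?_⟩
  rw [integral_finsetSum _ fun k _ => (hlog k).const_mul _]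
  simp_rw [integral_const_mul]

theorem geomMass_prod_rpow {f : ι → Rn n → ℝ} (hf : ∀ k x, 0 < f k x) {B : Set (Rn n)}
    (hlog : ∀ k, IntegrableOn (fun x => Real.log (f k x)) B) {t : ι → ℝ} (ht : ∀ k, 0 ≤ t k)
    (hsum : ∑ k, t k = 1) :
    geomMass (fun x => ∏ k, f k x ^ t k) B = ∏ k, geomMass (f k) B ^ t k := by
  simp only [geomMass]
  rw [(integral_log_prod_rpow hf hlog t).2, Real.prod_mul_rpow_of_sum_eq_one
    ENNReal.toReal_nonneg (fun k _ => (Real.exp_pos _).le) (fun k _ => ht k) hsum,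
    Finset.mul_sum, Real.exp_sum]
  congr 1
  refine Finset.prod_congr rfl fun k _ => ?_
  rw [← Real.exp_mul]
  ring_nf

theorem prod_wtMass_rpow_le_wtMass_prod_rpow {w : ι → Rn n → ℝ} (hw : ∀ k, IsWeight (w k))
    {CJ : ℝ} (hCJ : 0 ≤ CJ) (hJ : ∀ k, RevJensen (w k) CJ) {t : ι → ℝ} (ht : ∀ k, 0 ≤ t k)
    (hsum : ∑ k, t k = 1) (y : Rn n) {r : ℝ} (hr : 0 < r) :
    ∏ k, wtMass (w k) (ball y r) ^ t k ≤
      ENNReal.ofReal CJ * wtMass (fun x => ∏ k, w k x ^ t k) (ball y r) := by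
  have hlog : ∀ k, IntegrableOn (fun x => Real.log (w k x)) (ball y r) := fun k =>
    (hJ k).1.integrableOn_isCompact (isCompact_closedBall y r) |>.mono_set ball_subset_closedBall
  have hG : ∀ k, 0 ≤ CJ * geomMass (w k) (ball y r) := fun k =>
    mul_nonneg hCJ (geomMass_nonneg _ _)
  calc ∏ k, wtMass (w k) (ball y r) ^ t k
      ≤ ∏ k, ENNReal.ofReal (CJ * geomMass (w k) (ball y r)) ^ t k :=
        Finset.prod_le_prod' fun k _ =>
          ENNReal.rpow_le_rpow ((hJ k).wtMass_ball_le (hw k) y hr) (ht k)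
    _ = ENNReal.ofReal (CJ * geomMass (fun x => ∏ k, w k x ^ t k) (ball y r)) := by
        rw [geomMass_prod_rpow (fun k => (hw k).2.1) hlog ht hsum,
          ← Real.prod_mul_rpow_of_sum_eq_one hCJ (fun k _ => geomMass_nonneg _ _)
            (fun k _ => ht k) hsum,
          ENNReal.ofReal_prod_of_nonneg fun k _ => Real.rpow_nonneg (hG k) _]
        exact Finset.prod_congr rfl fun k _ => ENNReal.ofReal_rpow_of_nonneg (hG k) (ht k)
    _ ≤ ENNReal.ofReal CJ * wtMass (fun x => ∏ k, w k x ^ t k) (ball y r) := by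
        rw [ENNReal.ofReal_mul hCJ]
        gcongr
        exact ofReal_geomMass_le_wtMass (fun x => Finset.prod_pos fun k _ =>
            Real.rpow_pos_of_pos ((hw k).2.1 x) _) (measure_ball_pos volume y hr).ne'
          measure_ball_lt_top.ne (integral_log_prod_rpow (fun k => (hw k).2.1) hlog t).1

end GeometricMean

/-- under the balance condition, `1/p_k + 1/q_k - 1/α_k = (p/p_k)(1/p+1/q-1/α) > 0`
for each `k`, and for weights satisfying the reverse Jensen inequality,
`∏_k w_k(B)^{1/p_k+1/q_k-1/α_k} ≤ C ν(B)^{1/p+1/q-1/α}` for every ball `B`. -/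
theorem balance_exponents_and_weight_product_bound
    {n m : ℕ} (hm : 1 ≤ m) (p q α : ℝ) (pk qk αk : Fin m → ℝ)
    (hpk : ∀ k, 1 ≤ pk k) (hpα : ∀ k, pk k ≤ αk k) (hαq : ∀ k, αk k < qk k)
    (hp : 1/p = ∑ k, 1/pk k) (hq : 1/q = ∑ k, 1/qk k) (hα : 1/α = ∑ k, 1/αk k)
    (hbal : ∀ k l : Fin m, pk k * (1/αk k - 1/qk k) = pk l * (1/αk l - 1/qk l)) :
    (∀ k, 1/pk k + 1/qk k - 1/αk k = (p / pk k) * (1/p + 1/q - 1/α) ∧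
      0 < 1/pk k + 1/qk k - 1/αk k) ∧
    ∀ (w : Fin m → Rn n → ℝ), (∀ k, IsWeight (w k)) →
      ∀ CJ : ℝ, (∀ k, RevJensen (w k) CJ) →
        ∃ C : ℝ, 0 < C ∧ ∀ (y : Rn n) (r : ℝ), 0 < r →
          (∏ k, wtMass (w k) (ball y r) ^ (1/pk k + 1/qk k - 1/αk k)) ≤
            ENNReal.ofReal C * wtMass (nuW p pk w) (ball y r) ^ (1/p + 1/q - 1/α) := by
  have k₀ : Fin m := ⟨0, hm⟩
  have hpk0 : ∀ k, 0 < pk k := fun k => one_pos.trans_le (hpk k)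
  have : Nonempty (Fin m) := ⟨k₀⟩
  have hp0 : 0 < p := pos_of_one_div_eq_sum hpk0 hp
  have hexp := one_div_add_one_div_sub_one_div_eq_of_balance hpk0 hp hq hα (hbal · k₀)
  have hpos : ∀ k, 0 < 1/pk k + 1/qk k - 1/αk k := fun k =>
    one_div_add_one_div_sub_one_div_pos (hpk0 k) (hpα k) (hαq k)
  refine ⟨fun k => ⟨hexp k, hpos k⟩, fun w hw CJ hJ => ?_⟩
  have hβ : 0 ≤ 1/p + 1/q - 1/α := by
    rw [one_div_add_one_div_sub_one_div_eq_sum hp hq hα]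
    exact Finset.sum_nonneg fun k _ => (hpos k).le
  set β := 1/p + 1/q - 1/α
  have hCJ : 0 < CJ := (hJ k₀).pos (hw k₀)
  refine ⟨CJ ^ β, by positivity, fun y r hr => ?_⟩
  calc ∏ k, wtMass (w k) (ball y r) ^ (1/pk k + 1/qk k - 1/αk k)
      = (∏ k, wtMass (w k) (ball y r) ^ (p / pk k)) ^ β := by
        simp_rw [← ENNReal.prod_rpow_of_nonneg hβ, ← ENNReal.rpow_mul, hexp]
    _ ≤ (ENNReal.ofReal CJ * wtMass (nuW p pk w) (ball y r)) ^ β := by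
        gcongr
        exact prod_wtMass_rpow_le_wtMass_prod_rpow hw hCJ.le hJ
          (fun k => (div_pos hp0 (hpk0 k)).le) (sum_div_eq_one_of_one_div_eq_sum hp0.ne' hp) y hr
    _ = ENNReal.ofReal (CJ ^ β) * wtMass (nuW p pk w) (ball y r) ^ β := by
        rw [ENNReal.mul_rpow_of_nonneg _ _ hβ, ENNReal.ofReal_rpow_of_nonneg hCJ.le hβ]
end
end

section
/- Let n, m ≥ 1. There is a constant C, depending only on n and m, such that for every y ∈ ℝ^n, every r > 0, every x ∈ B(y,r), and all nonnegative measurable functions f_1,…,f_m on ℝ^n: ∫_{(ℝ^n)^m ∖ B(y,2r)^m} [Π_{k=1}^m f_k(z_k)] / (Σ_{k=1}^m |x−z_k|)^{mn} dz_1…dz_m ≤ C Σ_{j=1}^∞ Π_{k=1}^m ( |B(y,2^{j+1}r)|^{−1} ∫_{B(y,2^{j+1}r)} f_k ), where B(y,2r)^m denotes the m-fold Cartesian product of the ball B(y,2r). -/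
open MeasureTheory Metric ENNReal

noncomputable section

lemma lintegral_pi_prod_aux {N : ℕ} {α : Type*} [MeasurableSpace α]
    (μ : Fin N → Measure α) [∀ i, SigmaFinite (μ i)]
    (f : Fin N → α → ℝ≥0∞) (hf : ∀ i, Measurable (f i)) :
    ∫⁻ x : Fin N → α, ∏ i, f i (x i) ∂Measure.pi μ = ∏ i, ∫⁻ x, f i x ∂μ i := by
  induction N with
  | zero => simp [lintegral_const, Measure.pi_univ]
  | succ N ih =>
    have e := measurePreserving_piFinSuccAbove μ 0
    calc ∫⁻ x : Fin (N+1) → α, ∏ i, f i (x i) ∂Measure.pi μ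
        = ∫⁻ p : α × (Fin N → α), f 0 p.1 *
            ∏ i : Fin N, f ((0 : Fin (N+1)).succAbove i) (p.2 i)
            ∂((μ 0).prod (Measure.pi fun i => μ ((0 : Fin (N+1)).succAbove i))) := by
          rw [← e.lintegral_comp_emb
            (MeasurableEquiv.piFinSuccAbove (fun _ => α) 0).measurableEmbedding]
          congr 1
          ext x
          rw [Fin.prod_univ_succAbove (fun i => f i (x i)) 0]
          simp [MeasurableEquiv.piFinSuccAbove_apply, Fin.tail, Fin.zero_succAbove]
      _ = (∫⁻ x, f 0 x ∂μ 0) *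
            ∏ i : Fin N, ∫⁻ x, f ((0 : Fin (N+1)).succAbove i) x ∂μ ((0 : Fin (N+1)).succAbove i) := by
          have hg : AEMeasurable
              (fun v : Fin N → α => ∏ i : Fin N, f ((0 : Fin (N+1)).succAbove i) (v i))
              (Measure.pi fun i => μ ((0 : Fin (N+1)).succAbove i)) :=
            (Finset.measurable_prod _ fun i _ => (hf _).comp (measurable_pi_apply i)).aemeasurable
          exact (lintegral_prod_mul (hf 0).aemeasurable hg).trans
            (by rw [ih (fun i => μ ((0 : Fin (N+1)).succAbove i))
              (fun i => f ((0 : Fin (N+1)).succAbove i)) (fun i => hf _)])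
      _ = ∏ i, ∫⁻ x, f i x ∂μ i := (Fin.prod_univ_succAbove (fun i => ∫⁻ x, f i x ∂μ i) 0).symm

/-- the multilinear kernel integral over `(ℝ^n)^m ∖ B(y,2r)^m` is dominated
by the sum of products of averages over the dyadic dilates `B(y,2^{j+1}r)`, `j ≥ 1`. -/
theorem multilinear_kernel_annuli_bound
    {n m : ℕ} (hn : 1 ≤ n) (hm : 1 ≤ m) :
    ∃ C : ℝ, 0 < C ∧ ∀ (y : Rn n) (r : ℝ), 0 < r → ∀ x ∈ ball y r,
      ∀ f : Fin m → Rn n → ℝ≥0∞, (∀ k, Measurable (f k)) →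
      (∫⁻ z in {z : Fin m → Rn n | ¬ ∀ k, z k ∈ ball y (2*r)},
          (∏ k, f k (z k)) / ENNReal.ofReal ((∑ k, dist x (z k)) ^ (m * n))) ≤
        ENNReal.ofReal C *
          ∑' j : ℕ, ∏ k,
            (volume (ball y ((2:ℝ)^(j+2) * r)))⁻¹ *
              ∫⁻ u in ball y ((2:ℝ)^(j+2) * r), f k u := by
  classical
  haveI : Nonempty (Fin n) := ⟨⟨0, hn⟩⟩
  haveI : Nonempty (Fin m) := ⟨⟨0, hm⟩⟩
  set κ : ℝ := Real.sqrt Real.pi ^ n / Real.Gamma ((n : ℝ) / 2 + 1) with hκdef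
  have hκ : 0 < κ := by
    apply div_pos (pow_pos (Real.sqrt_pos.mpr Real.pi_pos) n)
    exact Real.Gamma_pos_of_pos (by positivity)
  refine ⟨((4:ℝ) ^ n * κ) ^ m, by positivity, ?_⟩
  intro y r hr x hx f hf
  set C : ℝ := ((4:ℝ) ^ n * κ) ^ m with hCdef
  have hC : 0 < C := by positivity
  set A : ℕ → Set (Fin m → Rn n) := fun j =>
    {z | (∀ k, z k ∈ ball y ((2:ℝ) ^ (j+2) * r)) ∧ ¬ ∀ k, z k ∈ ball y ((2:ℝ) ^ (j+1) * r)}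
    with hAdef
  have hball : ∀ ρ : ℝ, MeasurableSet {z : Fin m → Rn n | ∀ k, z k ∈ ball y ρ} := by
    intro ρ
    rw [Set.setOf_forall]
    exact MeasurableSet.iInter fun k => (measurable_pi_apply k) measurableSet_ball
  have hA : ∀ j, MeasurableSet (A j) := fun j =>
    ((hball _).inter (hball _).compl)
  have hcover : {z : Fin m → Rn n | ¬ ∀ k, z k ∈ ball y (2*r)} ⊆ ⋃ j, A j := by
    intro z hz
    simp only [Set.mem_setOf_eq] at hz
    have hex : ∃ j : ℕ, ∀ k, z k ∈ ball y ((2:ℝ) ^ (j+2) * r) := by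
      have hne : (Finset.univ : Finset (Fin m)).Nonempty := Finset.univ_nonempty
      obtain ⟨j, hj⟩ := pow_unbounded_of_one_lt
        ((Finset.univ.sup' hne fun k => dist (z k) y) / r) (one_lt_two (α := ℝ))
      refine ⟨j, fun k => ?_⟩
      rw [mem_ball]
      have h1 : dist (z k) y ≤ Finset.univ.sup' hne fun k => dist (z k) y :=
        Finset.le_sup' (fun k => dist (z k) y) (Finset.mem_univ k)
      have h2 : Finset.univ.sup' hne (fun k => dist (z k) y) < 2 ^ j * r :=
        (div_lt_iff₀ hr).mp hj
      have h3 : (2:ℝ) ^ j * r ≤ 2 ^ (j+2) * r := by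
        apply mul_le_mul_of_nonneg_right _ hr.le
        exact pow_le_pow_right₀ one_le_two (by omega)
      linarith
    refine Set.mem_iUnion.mpr ⟨Nat.find hex, Nat.find_spec hex, ?_⟩
    intro hco
    rcases Nat.eq_zero_or_pos (Nat.find hex) with h0 | hpos
    · apply hz
      intro k
      have hk := hco k
      rw [h0] at hk
      norm_num at hk
      exact hk
    · refine Nat.find_min hex
        (show Nat.find hex - 1 < Nat.find hex from Nat.sub_lt hpos one_pos) ?_
      intro k
      have hk := hco k
      have he : Nat.find hex - 1 + 2 = Nat.find hex + 1 := by omega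
      rwa [he]
  have hCne0 : (ENNReal.ofReal C) ≠ 0 := by
    simp [ENNReal.ofReal_eq_zero, not_le, hC]
  have hCnetop : (ENNReal.ofReal C) ≠ ⊤ := ENNReal.ofReal_ne_top
  have key : ∀ j : ℕ,
      (∫⁻ z in A j, (∏ k, f k (z k)) / ENNReal.ofReal ((∑ k, dist x (z k)) ^ (m * n)))
        ≤ ENNReal.ofReal C * ∏ k, (volume (ball y ((2:ℝ)^(j+2) * r)))⁻¹ *
            ∫⁻ u in ball y ((2:ℝ)^(j+2) * r), f k u := by
    intro j
    set ρ : ℝ := (2:ℝ) ^ (j+2) * r with hρ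
    set B : Set (Rn n) := ball y ρ with hB
    set K : ℝ≥0∞ := ENNReal.ofReal (((2:ℝ) ^ j * r) ^ (m * n)) with hKdef
    have hbase : (0:ℝ) < (2:ℝ) ^ j * r := by positivity
    have hK0 : K ≠ 0 := by
      rw [hKdef]
      simp only [ne_eq, ENNReal.ofReal_eq_zero, not_le]
      positivity
    have hpt : ∀ z ∈ A j,
        (∏ k, f k (z k)) / ENNReal.ofReal ((∑ k, dist x (z k)) ^ (m * n))
          ≤ (∏ k, f k (z k)) * K⁻¹ := by
      intro z hz
      rw [← div_eq_mul_inv]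
      apply ENNReal.div_le_div_left
      rw [hKdef]
      apply ENNReal.ofReal_le_ofReal
      apply pow_le_pow_left₀ hbase.le
      obtain ⟨k₀, hk₀⟩ := not_forall.mp hz.2
      have h1 : (2:ℝ) ^ (j+1) * r ≤ dist (z k₀) y := by
        by_contra h
        exact hk₀ (mem_ball.mpr (lt_of_not_ge h))
      have h1' : 2 * ((2:ℝ) ^ j * r) ≤ dist (z k₀) y := by
        have hre : (2:ℝ) ^ (j+1) * r = 2 * (2 ^ j * r) := by ring
        rwa [hre] at h1
      have h2 : dist x y < r := mem_ball.mp hx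
      have h3 : dist (z k₀) y ≤ dist (z k₀) x + dist x y := dist_triangle _ _ _
      have h4 : (1:ℝ) ≤ 2 ^ j := one_le_pow₀ one_le_two
      have h5 : dist (z k₀) x = dist x (z k₀) := dist_comm _ _
      have h6 : dist x (z k₀) ≤ ∑ k, dist x (z k) :=
        Finset.single_le_sum (fun k _ => dist_nonneg) (Finset.mem_univ k₀)
      have h8 : r ≤ 2 ^ j * r := le_mul_of_one_le_left hr.le h4
      linarith
    have step1 : (∫⁻ z in A j, (∏ k, f k (z k)) / ENNReal.ofReal ((∑ k, dist x (z k)) ^ (m * n)))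
        ≤ (∫⁻ z in A j, ∏ k, f k (z k)) * K⁻¹ := by
      rw [← lintegral_mul_const' K⁻¹ (fun z : Fin m → Rn n => ∏ k, f k (z k)) (ENNReal.inv_ne_top.mpr hK0)]
      exact setLIntegral_mono' (hA j) hpt
    have step2 : (∫⁻ z in A j, ∏ k, f k (z k)) ≤ ∏ k, ∫⁻ u in B, f k u := by
      have hind : (∫⁻ z in A j, ∏ k, f k (z k))
          ≤ ∫⁻ z : Fin m → Rn n, ∏ k, B.indicator (f k) (z k) := by
        refine le_trans (setLIntegral_mono
          (g := fun z : Fin m → Rn n => ∏ k, B.indicator (f k) (z k))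
          (by exact Finset.measurable_prod _ fun k _ =>
            ((hf k).indicator measurableSet_ball).comp (measurable_pi_apply k)) ?_)
          (setLIntegral_le_lintegral _ _)
        intro z hz
        refine le_of_eq (Finset.prod_congr rfl fun k _ => ?_)
        rw [Set.indicator_of_mem (hz.1 k)]
      refine hind.trans (le_of_eq ?_)
      rw [volume_pi, lintegral_pi_prod_aux _ _
        (fun k => (hf k).indicator measurableSet_ball)]
      exact Finset.prod_congr rfl fun k _ => lintegral_indicator measurableSet_ball _
    have hvol : volume B ^ m = ENNReal.ofReal C * K := by
      rw [hB, EuclideanSpace.volume_ball, Fintype.card_fin, ← hκdef]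
      have h4ρ : ρ = 4 * ((2:ℝ) ^ j * r) := by rw [hρ]; ring
      rw [h4ρ, ENNReal.ofReal_mul (by norm_num : (0:ℝ) ≤ 4), hKdef, hCdef,
        ENNReal.ofReal_pow (by positivity : (0:ℝ) ≤ 4 ^ n * κ),
        ENNReal.ofReal_mul (by positivity : (0:ℝ) ≤ (4:ℝ) ^ n),
        ENNReal.ofReal_pow (by norm_num : (0:ℝ) ≤ 4),
        ENNReal.ofReal_pow hbase.le]
      ring
    calc (∫⁻ z in A j, (∏ k, f k (z k)) / ENNReal.ofReal ((∑ k, dist x (z k)) ^ (m * n)))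
        ≤ (∫⁻ z in A j, ∏ k, f k (z k)) * K⁻¹ := step1
      _ ≤ (∏ k, ∫⁻ u in B, f k u) * K⁻¹ := mul_le_mul_left step2 _
      _ = ENNReal.ofReal C * ∏ k, (volume B)⁻¹ * ∫⁻ u in B, f k u := by
          rw [Finset.prod_mul_distrib, Finset.prod_const, Finset.card_univ, Fintype.card_fin,
            ← ENNReal.inv_pow, hvol,
            ENNReal.mul_inv (Or.inl hCne0) (Or.inl hCnetop), ← mul_assoc, ← mul_assoc,
            ENNReal.mul_inv_cancel hCne0 hCnetop, one_mul, mul_comm]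
  calc ∫⁻ z in {z : Fin m → Rn n | ¬ ∀ k, z k ∈ ball y (2*r)},
        (∏ k, f k (z k)) / ENNReal.ofReal ((∑ k, dist x (z k)) ^ (m * n))
      ≤ ∫⁻ z in ⋃ j, A j,
          (∏ k, f k (z k)) / ENNReal.ofReal ((∑ k, dist x (z k)) ^ (m * n)) :=
        lintegral_mono_set hcover
    _ ≤ ∑' j, ∫⁻ z in A j,
          (∏ k, f k (z k)) / ENNReal.ofReal ((∑ k, dist x (z k)) ^ (m * n)) :=
        lintegral_iUnion_le _ _
    _ ≤ ∑' j, ENNReal.ofReal C * ∏ k, (volume (ball y ((2:ℝ)^(j+2) * r)))⁻¹ *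
          ∫⁻ u in ball y ((2:ℝ)^(j+2) * r), f k u := ENNReal.tsum_le_tsum key
    _ = ENNReal.ofReal C * ∑' j, ∏ k, (volume (ball y ((2:ℝ)^(j+2) * r)))⁻¹ *
          ∫⁻ u in ball y ((2:ℝ)^(j+2) * r), f k u := ENNReal.tsum_mul_left
end
end

section
/- Let n, m ≥ 1 and 1 ≤ ℓ < m. There is a constant C, depending only on n and m, such that for every y ∈ ℝ^n, every r > 0, every x ∈ B(y,r), and all nonnegative measurable functions f_1,…,f_m on ℝ^n: ∫_{((ℝ^n)^ℓ ∖ B(y,2r)^ℓ) × B(y,2r)^{m−ℓ}} [Π_{k=1}^m f_k(z_k)] / (Σ_{k=1}^m |x−z_k|)^{mn} dz_1…dz_m ≤ C Σ_{j=1}^∞ Π_{k=1}^m ( |B(y,2^{j+1}r)|^{−1} ∫_{B(y,2^{j+1}r)} f_k ), where the domain of integration consists of tuples (z_1,…,z_m) with (z_1,…,z_ℓ) ∉ B(y,2r)^ℓ and z_{ℓ+1},…,z_m ∈ B(y,2r). -/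
/-!
Cover the complement of `B(y,2r)^m` by the dyadic shells `B(y,2^{j+2}r)^m \ B(y,2^{j+1}r)^m`.
On the `j`-th shell some `z_k` is at distance at least `2^{j+1}r` from `y`, hence at least
`2^j r` from `x ∈ B(y,r)`, so the kernel is at most `(2^j r)^{-mn}`. Enlarging the shell to the
box `B(y,2^{j+2}r)^m`, Tonelli turns the integral of `∏ f_k(z_k)` into `∏ ∫_B f_k`, and
`(2^j r)^{mn}` is `|B(y,2^{j+2}r)|^m` up to the factor `4^{mn} |B(0,1)|^m`.
-/

open MeasureTheory Metric ENNReal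

noncomputable section

theorem lintegral_fin_nat_prod_eq_prod {N : ℕ} {E : Fin N → Type*}
    {mE : ∀ i, MeasurableSpace (E i)} {μ : (i : Fin N) → Measure (E i)} [∀ i, SigmaFinite (μ i)]
    (f : (i : Fin N) → E i → ℝ≥0∞) (hf : ∀ i, Measurable (f i)) :
    ∫⁻ x : (i : Fin N) → E i, ∏ i, f i (x i) ∂(Measure.pi μ) = ∏ i, ∫⁻ x, f i x ∂(μ i) := by
  induction N with
  | zero => simp
  | succ N ih =>
    calc
      _ = ∫⁻ x : E 0 × ((i : Fin N) → E (Fin.succ i)),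
            f 0 x.1 * ∏ i : Fin N, f (Fin.succ i) (x.2 i)
            ∂((μ 0).prod (Measure.pi fun i ↦ μ i.succ)) := by
        rw [((measurePreserving_piFinSuccAbove μ 0).symm).lintegral_map_equiv]
        simp_rw [MeasurableEquiv.piFinSuccAbove_symm_apply, Fin.insertNthEquiv,
          Fin.prod_univ_succ, Fin.insertNth_zero, Equiv.coe_fn_mk, Fin.cons_succ]
        rfl
      _ = (∫⁻ x, f 0 x ∂μ 0) * ∏ i : Fin N, ∫⁻ x, f i.succ x ∂μ i.succ := by
        rw [← ih (fun i : Fin N ↦ f i.succ) (fun i ↦ hf i.succ)]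
        exact lintegral_prod_mul (hf 0).aemeasurable (Finset.measurable_prod _
          fun (i : Fin N) _ ↦ (hf i.succ).comp (measurable_pi_apply i)).aemeasurable
      _ = ∏ i, ∫⁻ x, f i x ∂μ i := (Fin.prod_univ_succ fun i ↦ ∫⁻ x, f i x ∂μ i).symm

theorem setLIntegral_univ_pi_fin_prod_eq_prod {N : ℕ} {E : Fin N → Type*}
    {mE : ∀ i, MeasurableSpace (E i)} {μ : (i : Fin N) → Measure (E i)} [∀ i, SigmaFinite (μ i)]
    (s : (i : Fin N) → Set (E i)) (f : (i : Fin N) → E i → ℝ≥0∞) (hf : ∀ i, Measurable (f i)) :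
    ∫⁻ x in Set.univ.pi s, ∏ i, f i (x i) ∂(Measure.pi μ) = ∏ i, ∫⁻ x in s i, f i x ∂(μ i) := by
  rw [Measure.restrict_pi_pi, lintegral_fin_nat_prod_eq_prod f hf]

theorem compl_subset_iUnion_succ_diff {α : Type*} {P : ℕ → Set α} (hP : Monotone P)
    (hcover : ⋃ j, P j = Set.univ) : (P 0)ᶜ ⊆ ⋃ j, P (j + 1) \ P j := by
  intro z hz
  obtain ⟨j, hj⟩ := Set.mem_iUnion.1 (iUnion_disjointed (f := P) ▸ hcover ▸ Set.mem_univ z)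
  cases j with
  | zero => exact absurd (disjointed_zero P ▸ hj) hz
  | succ j => exact Set.mem_iUnion.2 ⟨j, hP.disjointed_succ (not_isMax j) ▸ hj⟩

theorem iUnion_univ_pi_ball_of_tendsto {X ι : Type*} [PseudoMetricSpace X] [Finite ι]
    (y : X) {R : ℕ → ℝ} (hR : Filter.Tendsto R Filter.atTop Filter.atTop) :
    ⋃ j, Set.univ.pi (fun _ : ι ↦ ball y (R j)) = Set.univ := by
  refine Set.eq_univ_of_forall fun z ↦ Set.mem_iUnion.2 ?_
  obtain ⟨j, hj⟩ := (Filter.eventually_all.2 fun k ↦ hR.eventually_gt_atTop (dist (z k) y)).exists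
  exact ⟨j, fun k _ ↦ hj k⟩

theorem le_sum_dist_of_le_dist {X ι : Type*} [PseudoMetricSpace X] [Fintype ι]
    {x y : X} {r ρ : ℝ} (hx : dist x y < r) (hrρ : r ≤ ρ) {z : ι → X} {k : ι}
    (hk : 2 * ρ ≤ dist (z k) y) : ρ ≤ ∑ i, dist x (z i) := by
  have hxz : dist (z k) y ≤ dist x (z k) + dist x y := dist_triangle_left _ _ _
  calc ρ ≤ dist x (z k) := by linarith
    _ ≤ ∑ i, dist x (z i) := Finset.single_le_sum (fun i _ ↦ dist_nonneg) (Finset.mem_univ k)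

def multilinearKernel {X : Type*} [PseudoMetricSpace X] {m : ℕ} (d : ℕ)
    (f : Fin m → X → ℝ≥0∞) (x : X) (z : Fin m → X) : ℝ≥0∞ :=
  (∏ k, f k (z k)) / ENNReal.ofReal ((∑ k, dist x (z k)) ^ (m * d))

section AddHaar

open Module

variable {E : Type*} [NormedAddCommGroup E] [NormedSpace ℝ E] [MeasurableSpace E] (μ : Measure E)

def kernelAnnuliConst (m : ℕ) : ℝ≥0∞ := 4 ^ (m * finrank ℝ E) * μ (ball 0 1) ^ m

theorem kernelAnnuliConst_ne_zero [μ.IsOpenPosMeasure] (m : ℕ) : kernelAnnuliConst μ m ≠ 0 :=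
  mul_ne_zero (pow_ne_zero _ (by norm_num)) (pow_ne_zero _ (measure_ball_pos μ 0 one_pos).ne')

variable [FiniteDimensional ℝ E]

theorem kernelAnnuliConst_ne_top [IsFiniteMeasureOnCompacts μ] (m : ℕ) :
    kernelAnnuliConst μ m ≠ ⊤ :=
  ENNReal.mul_ne_top (ENNReal.pow_ne_top ENNReal.ofNat_ne_top)
    (ENNReal.pow_ne_top measure_ball_lt_top.ne)

variable [BorelSpace E] [μ.IsAddHaarMeasure]

theorem addHaar_ball_four_mul_pow (y : E) {ρ : ℝ} (hρ : 0 < ρ) (m : ℕ) :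
    μ (ball y (4 * ρ)) ^ m = kernelAnnuliConst μ m * ENNReal.ofReal (ρ ^ (m * finrank ℝ E)) := by
  rw [Measure.addHaar_ball_of_pos μ y (by positivity), mul_pow,
    ← ENNReal.ofReal_pow (by positivity), ← pow_mul, mul_pow, ENNReal.ofReal_mul (by positivity),
    mul_comm (finrank ℝ E) m, ENNReal.ofReal_pow zero_le_four, ENNReal.ofReal_ofNat,
    kernelAnnuliConst]
  ring

theorem setLIntegral_multilinearKernel_annulus_le {m : ℕ} (f : Fin m → E → ℝ≥0∞)
    (hf : ∀ k, Measurable (f k)) {x y : E} {r ρ : ℝ} (hx : dist x y < r) (hrρ : r ≤ ρ) :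
    ∫⁻ z in (Set.univ.pi fun _ ↦ ball y (4 * ρ)) \ Set.univ.pi fun _ ↦ ball y (2 * ρ),
        multilinearKernel (finrank ℝ E) f x z ∂(Measure.pi fun _ ↦ μ) ≤
      kernelAnnuliConst μ m * ∏ k, (μ (ball y (4 * ρ)))⁻¹ * ∫⁻ u in ball y (4 * ρ), f k u ∂μ := by
  have hρ : 0 < ρ := (dist_nonneg.trans_lt hx).trans_le hrρ
  set a := ENNReal.ofReal (ρ ^ (m * finrank ℝ E))
  have ha : a ≠ 0 := (ENNReal.ofReal_pos.2 (by positivity)).ne'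
  have hkernel : ∀ z ∈ (Set.univ.pi fun _ ↦ ball y (4 * ρ)) \ Set.univ.pi fun _ ↦ ball y (2 * ρ),
      multilinearKernel (finrank ℝ E) f x z ≤ (∏ k, f k (z k)) / a := by
    rintro z ⟨-, hz⟩
    simp only [Set.mem_univ_pi, not_forall] at hz
    obtain ⟨k, hk⟩ := hz
    exact ENNReal.div_le_div_left (ENNReal.ofReal_le_ofReal (pow_le_pow_left₀ hρ.le
      (le_sum_dist_of_le_dist hx hrρ (not_lt.1 hk)) _)) _
  have hc0 := kernelAnnuliConst_ne_zero μ m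
  have hctop := kernelAnnuliConst_ne_top μ m
  calc _ ≤ ∫⁻ z in (Set.univ.pi fun _ ↦ ball y (4 * ρ)) \ Set.univ.pi fun _ ↦ ball y (2 * ρ),
        (∏ k, f k (z k)) / a ∂(Measure.pi fun _ ↦ μ) :=
        setLIntegral_mono' ((MeasurableSet.univ_pi fun _ ↦ measurableSet_ball).diff
          (MeasurableSet.univ_pi fun _ ↦ measurableSet_ball)) hkernel
    _ ≤ ∫⁻ z in Set.univ.pi fun _ ↦ ball y (4 * ρ),
          (∏ k, f k (z k)) / a ∂(Measure.pi fun _ ↦ μ) :=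
        lintegral_mono_set Set.sdiff_subset
    _ = (∏ k, ∫⁻ u in ball y (4 * ρ), f k u ∂μ) / a := by
        simp_rw [div_eq_mul_inv]
        rw [lintegral_mul_const' _ _ (ENNReal.inv_ne_top.2 ha),
          setLIntegral_univ_pi_fin_prod_eq_prod _ f hf]
    _ = _ := by
        rw [Finset.prod_mul_distrib, Finset.prod_const, Finset.card_univ, Fintype.card_fin,
          ← ENNReal.inv_pow, addHaar_ball_four_mul_pow μ y hρ,
          ENNReal.mul_inv (.inl hc0) (.inl hctop), ← mul_assoc, ← mul_assoc,
          ENNReal.mul_inv_cancel hc0 hctop, one_mul, div_eq_mul_inv, mul_comm]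

theorem setLIntegral_multilinearKernel_compl_ball_le {m : ℕ} (f : Fin m → E → ℝ≥0∞)
    (hf : ∀ k, Measurable (f k)) {x y : E} {r : ℝ} (hx : x ∈ ball y r) :
    ∫⁻ z in (Set.univ.pi fun _ ↦ ball y (2 * r))ᶜ,
        multilinearKernel (finrank ℝ E) f x z ∂(Measure.pi fun _ ↦ μ) ≤
      kernelAnnuliConst μ m * ∑' j : ℕ, ∏ k,
        (μ (ball y (2 ^ (j + 2) * r)))⁻¹ * ∫⁻ u in ball y (2 ^ (j + 2) * r), f k u ∂μ := by
  have hr : 0 < r := pos_of_mem_ball hx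
  set P : ℕ → Set (Fin m → E) := fun j ↦ Set.univ.pi fun _ ↦ ball y (2 * (2 ^ j * r))
  have hP : Monotone P := fun i j hij ↦ Set.pi_mono fun _ _ ↦
    ball_subset_ball (by gcongr; norm_num)
  have hcover : ⋃ j, P j = Set.univ := iUnion_univ_pi_ball_of_tendsto y
    (((tendsto_pow_atTop_atTop_of_one_lt (by norm_num : (1 : ℝ) < 2)).atTop_mul_const hr)
      |>.const_mul_atTop two_pos)
  have hannuli : (Set.univ.pi fun _ ↦ ball y (2 * r))ᶜ ⊆
      ⋃ j, (Set.univ.pi fun _ ↦ ball y (4 * (2 ^ j * r))) \ P j := by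
    convert compl_subset_iUnion_succ_diff hP hcover using 6
    · ring
    · ring_nf
  calc _ ≤ ∫⁻ z in ⋃ j, (Set.univ.pi fun _ ↦ ball y (4 * (2 ^ j * r))) \ P j,
          multilinearKernel (finrank ℝ E) f x z ∂(Measure.pi fun _ ↦ μ) :=
        lintegral_mono_set hannuli
    _ ≤ ∑' j, ∫⁻ z in (Set.univ.pi fun _ ↦ ball y (4 * (2 ^ j * r))) \ P j,
          multilinearKernel (finrank ℝ E) f x z ∂(Measure.pi fun _ ↦ μ) :=
        lintegral_iUnion_le _ _
    _ ≤ ∑' j : ℕ, kernelAnnuliConst μ m * ∏ k, (μ (ball y (4 * (2 ^ j * r))))⁻¹ *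
          ∫⁻ u in ball y (4 * (2 ^ j * r)), f k u ∂μ :=
        ENNReal.tsum_le_tsum fun j ↦ setLIntegral_multilinearKernel_annulus_le μ f hf hx
          (le_mul_of_one_le_left hr.le (one_le_pow₀ (by norm_num)))
    _ = _ := by
        simp only [ENNReal.tsum_mul_left, show ∀ j : ℕ, 4 * (2 ^ j * r) = 2 ^ (j + 2) * r
          from fun j ↦ by ring]

end AddHaar

theorem multilinear_kernel_mixed_annuli_bound_general
    {n m : ℕ} (ℓ : ℕ) :
    ∃ C : ℝ, 0 < C ∧ ∀ (y : Rn n) (r : ℝ), 0 < r → ∀ x ∈ ball y r,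
      ∀ f : Fin m → Rn n → ℝ≥0∞, (∀ k, Measurable (f k)) →
      (∫⁻ z in {z : Fin m → Rn n |
            (¬ ∀ k : Fin m, (k:ℕ) < ℓ → z k ∈ ball y (2*r)) ∧
            (∀ k : Fin m, ℓ ≤ (k:ℕ) → z k ∈ ball y (2*r))},
          (∏ k, f k (z k)) / ENNReal.ofReal ((∑ k, dist x (z k)) ^ (m * n))) ≤
        ENNReal.ofReal C *
          ∑' j : ℕ, ∏ k,
            (volume (ball y ((2:ℝ)^(j+2) * r)))⁻¹ *
              ∫⁻ u in ball y ((2:ℝ)^(j+2) * r), f k u := by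
  have hctop := kernelAnnuliConst_ne_top (volume : Measure (Rn n)) m
  refine ⟨(kernelAnnuliConst volume m).toReal,
    ENNReal.toReal_pos (kernelAnnuliConst_ne_zero _ m) hctop, ?_⟩
  intro y r _ x hx f hf
  have hsub : {z : Fin m → Rn n | (¬ ∀ k : Fin m, (k:ℕ) < ℓ → z k ∈ ball y (2*r)) ∧
      (∀ k : Fin m, ℓ ≤ (k:ℕ) → z k ∈ ball y (2*r))} ⊆ (Set.univ.pi fun _ ↦ ball y (2 * r))ᶜ :=
    fun z hz hball ↦ hz.1 fun k _ ↦ hball k (Set.mem_univ k)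
  have hbound := setLIntegral_multilinearKernel_compl_ball_le volume f hf hx
  rw [finrank_euclideanSpace_fin] at hbound
  rw [ENNReal.ofReal_toReal hctop]
  exact (lintegral_mono_set hsub).trans hbound

/-- the multilinear kernel integral over
`((ℝ^n)^ℓ ∖ B(y,2r)^ℓ) × B(y,2r)^{m-ℓ}` is dominated by the sum of products of averages
over the dyadic dilates `B(y,2^{j+1}r)`, `j ≥ 1`. -/
theorem multilinear_kernel_mixed_annuli_bound
    {n m : ℕ} (hn : 1 ≤ n) (hm : 1 ≤ m) (ℓ : ℕ) (hℓ₁ : 1 ≤ ℓ) (hℓ₂ : ℓ < m) :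
    ∃ C : ℝ, 0 < C ∧ ∀ (y : Rn n) (r : ℝ), 0 < r → ∀ x ∈ ball y r,
      ∀ f : Fin m → Rn n → ℝ≥0∞, (∀ k, Measurable (f k)) →
      (∫⁻ z in {z : Fin m → Rn n |
            (¬ ∀ k : Fin m, (k:ℕ) < ℓ → z k ∈ ball y (2*r)) ∧
            (∀ k : Fin m, ℓ ≤ (k:ℕ) → z k ∈ ball y (2*r))},
          (∏ k, f k (z k)) / ENNReal.ofReal ((∑ k, dist x (z k)) ^ (m * n))) ≤
        ENNReal.ofReal C *
          ∑' j : ℕ, ∏ k,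
            (volume (ball y ((2:ℝ)^(j+2) * r)))⁻¹ *
              ∫⁻ u in ball y ((2:ℝ)^(j+2) * r), f k u :=
  multilinear_kernel_mixed_annuli_bound_general ℓ
end
end

section
/- Let m ≥ 1, p_1,…,p_m ∈ [1,∞) with 1/p = Σ_{k=1}^m 1/p_k, let w_1,…,w_m be weights, set ν = Π_k w_k^{p/p_k}, and let B be a ball such that (|B|^{−1}∫_B ν)^{1/p} · Π_{k=1}^m D_k ≤ C_W, where D_k = (|B|^{−1}∫_B w_k^{−p_k′/p_k})^{1/p_k′} if p_k > 1 (with p_k′ the conjugate exponent, w_k^{−p_k′/p_k} assumed locally integrable) and D_k = (essinf_B w_k)^{−1} if p_k = 1. Then for all measurable functions f_1,…,f_m: Π_{k=1}^m ( |B|^{−1}∫_B |f_k| ) ≤ C_W · ν(B)^{−1/p} · Π_{k=1}^m ( ∫_B |f_k|^{p_k} w_k )^{1/p_k}. -/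
open MeasureTheory Metric ENNReal

noncomputable section

/-!
On a set `B` of finite positive measure, Hölder's inequality with exponents `p_k, p_k'` applied
to `|f_k| = (|f_k| w_k^{1/p_k}) · w_k^{-1/p_k}` (for `p_k = 1`, the pointwise bound
`essinf_B w_k ≤ w_k`) gives `|B|⁻¹ ∫_B |f_k| ≤ |B|^{-1/p_k} D_k (∫_B |f_k|^{p_k} w_k)^{1/p_k}`.
Multiplying over `k`, the powers of `|B|` combine to `|B|^{-1/p}`, and the `A_P⃗` condition on
`B` bounds `|B|^{-1/p} ∏ D_k` by `C_W ν(B)^{-1/p}`, as `ν(B) > 0` for positive weights.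
-/

theorem ENNReal.rpow_sum {ι : Type*} {x : ℝ≥0∞} (hx₀ : x ≠ 0) (hx : x ≠ ⊤) (s : Finset ι)
    (a : ι → ℝ) : x ^ (∑ i ∈ s, a i) = ∏ i ∈ s, x ^ a i := by
  classical
  induction s using Finset.induction_on with
  | empty => simp
  | insert i s hi ih =>
    rw [Finset.sum_insert hi, Finset.prod_insert hi, ENNReal.rpow_add _ _ hx₀ hx, ih]

theorem ENNReal.le_inv_mul_mul_of_le {a e h : ℝ≥0∞} (he : e ≤ h) (h₀ : h ≠ 0) (hh : h ≠ ⊤) :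
    a ≤ e⁻¹ * (a * h) := by
  rcases eq_or_ne e 0 with rfl | he₀
  · rcases eq_or_ne a 0 with rfl | ha
    · simp
    · simp [ENNReal.top_mul (mul_ne_zero ha h₀)]
  · rw [← ENNReal.mul_le_iff_le_inv he₀ (ne_top_of_le_ne_top hh he), mul_comm a]
    gcongr

section WeightedHolder

variable {α : Type*} [MeasurableSpace α] {μ : Measure α}

theorem lintegral_le_essInf_inv_mul_lintegral_mul {f w : α → ℝ≥0∞} (hf : Measurable f)
    (hw : Measurable w) (hw₀ : ∀ x, w x ≠ 0) (hw_top : ∀ x, w x ≠ ⊤) :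
    ∫⁻ x, f x ∂μ ≤ (essInf w μ)⁻¹ * ∫⁻ x, f x * w x ∂μ := by
  rw [← lintegral_const_mul (f := fun x => f x * w x) _ (hf.mul hw)]
  exact lintegral_mono_ae <| (ae_essInf_le (f := w)).mono fun x hx =>
    ENNReal.le_inv_mul_mul_of_le hx (hw₀ x) (hw_top x)

theorem lintegral_le_weighted_holder {q : ℝ} (hq : 1 < q) {f w : α → ℝ} (hf : Measurable f)
    (hw : Measurable w) (hw₀ : ∀ x, 0 < w x) :
    ∫⁻ x, ENNReal.ofReal |f x| ∂μ ≤
      (∫⁻ x, ENNReal.ofReal |f x| ^ q * ENNReal.ofReal (w x) ∂μ) ^ (1 / q) *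
        (∫⁻ x, ENNReal.ofReal (w x ^ (-(1 / (q - 1)))) ∂μ) ^ ((q - 1) / q) := by
  have hq₀ : 0 < q := by linarith
  have hconj : q.HolderConjugate (q / (q - 1)) := .conjExponent hq
  have hW₀ (x : α) : ENNReal.ofReal (w x) ≠ 0 := ENNReal.ofReal_ne_zero_iff.mpr (hw₀ x)
  have holder := ENNReal.lintegral_mul_le_Lp_mul_Lq μ hconj
    ((hf.abs.ennreal_ofReal.mul (hw.ennreal_ofReal.pow_const (1 / q))).aemeasurable)
    ((hw.ennreal_ofReal.pow_const (-(1 / q))).aemeasurable)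
  have hsplit (x : α) :
      ENNReal.ofReal |f x| * ENNReal.ofReal (w x) ^ (1 / q) * ENNReal.ofReal (w x) ^ (-(1 / q)) =
        ENNReal.ofReal |f x| := by
    rw [mul_assoc, ← ENNReal.rpow_add _ _ (hW₀ x) ENNReal.ofReal_ne_top, add_neg_cancel,
      ENNReal.rpow_zero, mul_one]
  have hfirst (x : α) :
      (ENNReal.ofReal |f x| * ENNReal.ofReal (w x) ^ (1 / q)) ^ q =
        ENNReal.ofReal |f x| ^ q * ENNReal.ofReal (w x) := by
    rw [ENNReal.mul_rpow_of_nonneg _ _ hq₀.le, ← ENNReal.rpow_mul,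
      one_div_mul_cancel hq₀.ne', ENNReal.rpow_one]
  have hsecond (x : α) :
      (ENNReal.ofReal (w x) ^ (-(1 / q))) ^ (q / (q - 1)) =
        ENNReal.ofReal (w x ^ (-(1 / (q - 1)))) := by
    rw [← ENNReal.rpow_mul, ENNReal.ofReal_rpow_of_pos (hw₀ x)]
    congr 1
    field_simp
  simpa only [Pi.mul_apply, hsplit, hfirst, hsecond, one_div_div] using holder

end WeightedHolder

theorem average_abs_le_apFactor_mul_wtLpOn {n : ℕ} {q : ℝ} (hq : 1 ≤ q) {w f : Rn n → ℝ}
    (hw : Measurable w) (hw₀ : ∀ x, 0 < w x) (hf : Measurable f) {B : Set (Rn n)}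
    (hB₀ : volume B ≠ 0) (hB : volume B ≠ ⊤) :
    (volume B)⁻¹ * ∫⁻ x in B, ENNReal.ofReal |f x| ≤
      volume B ^ (-(1 / q)) * apFactor q w B * wtLpOn q w B f := by
  rw [apFactor, wtLpOn]
  rcases hq.eq_or_lt with rfl | hq₁
  · rw [if_pos rfl]
    calc (volume B)⁻¹ * ∫⁻ x in B, ENNReal.ofReal |f x|
        ≤ (volume B)⁻¹ * ((essInf (fun x => ENNReal.ofReal (w x)) (volume.restrict B))⁻¹ *
            ∫⁻ x in B, ENNReal.ofReal |f x| * ENNReal.ofReal (w x)) := by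
          gcongr
          exact lintegral_le_essInf_inv_mul_lintegral_mul hf.abs.ennreal_ofReal
            hw.ennreal_ofReal (fun x => ENNReal.ofReal_ne_zero_iff.mpr (hw₀ x))
            fun _ => ENNReal.ofReal_ne_top
      _ = _ := by simp [ENNReal.rpow_neg_one, mul_assoc]
  · rw [if_neg hq₁.ne']
    have hexp : -(1 / q) + -((q - 1) / q) = -1 := by field_simp; ring
    calc (volume B)⁻¹ * ∫⁻ x in B, ENNReal.ofReal |f x|
        ≤ (volume B)⁻¹ *
            ((∫⁻ x in B, ENNReal.ofReal |f x| ^ q * ENNReal.ofReal (w x)) ^ (1 / q) *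
              (∫⁻ x in B, ENNReal.ofReal (w x ^ (-(1 / (q - 1))))) ^ ((q - 1) / q)) := by
          gcongr
          exact lintegral_le_weighted_holder hq₁ hf hw hw₀
      _ = _ := by
          rw [ENNReal.mul_rpow_of_nonneg _ _ (div_nonneg (by linarith) (by linarith)),
            ENNReal.inv_rpow, ← ENNReal.rpow_neg, ← ENNReal.rpow_neg_one,
            ← hexp, ENNReal.rpow_add _ _ hB₀ hB]
          ring

theorem prod_average_abs_le {n m : ℕ} {p : ℝ} {pk : Fin m → ℝ} (hpk : ∀ k, 1 ≤ pk k)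
    (hp : 1 / p = ∑ k, 1 / pk k) {w f : Fin m → Rn n → ℝ} (hw : ∀ k, Measurable (w k))
    (hw₀ : ∀ k x, 0 < w k x) (hf : ∀ k, Measurable (f k)) {B : Set (Rn n)}
    (hB₀ : volume B ≠ 0) (hB : volume B ≠ ⊤) :
    ∏ k, (volume B)⁻¹ * ∫⁻ x in B, ENNReal.ofReal |f k x| ≤
      volume B ^ (-(1 / p)) * (∏ k, apFactor (pk k) (w k) B) *
        ∏ k, wtLpOn (pk k) (w k) B (f k) := by
  calc ∏ k, (volume B)⁻¹ * ∫⁻ x in B, ENNReal.ofReal |f k x|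
      ≤ ∏ k, volume B ^ (-(1 / pk k)) * apFactor (pk k) (w k) B *
          wtLpOn (pk k) (w k) B (f k) :=
        Finset.prod_le_prod' fun k _ =>
          average_abs_le_apFactor_mul_wtLpOn (hpk k) (hw k) (hw₀ k) (hf k) hB₀ hB
    _ = _ := by
        rw [Finset.prod_mul_distrib, Finset.prod_mul_distrib, ← ENNReal.rpow_sum hB₀ hB,
          Finset.sum_neg_distrib, ← hp]

theorem ENNReal.rpow_neg_mul_le_mul_rpow_neg {V N D c : ℝ≥0∞} {s : ℝ} (hs : 0 ≤ s)
    (hN : N ≠ 0) (hc : c ≠ ⊤) (h : (V⁻¹ * N) ^ s * D ≤ c) :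
    V ^ (-s) * D ≤ c * N ^ (-s) := by
  have hNs : N ^ s ≠ 0 := by simp [ENNReal.rpow_eq_zero_iff, hN, hs.not_gt]
  rw [ENNReal.rpow_neg N, ← div_eq_mul_inv, ENNReal.le_div_iff_mul_le (.inl hNs) (.inr hc)]
  rwa [ENNReal.mul_rpow_of_nonneg _ _ hs, ENNReal.inv_rpow, ← ENNReal.rpow_neg,
    mul_right_comm] at h

theorem wtMass_ne_zero {n : ℕ} {w : Rn n → ℝ} (hw : Measurable w) (hw₀ : ∀ x, 0 < w x)
    {E : Set (Rn n)} (hE : volume E ≠ 0) : wtMass w E ≠ 0 := by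
  have hsupp : Function.support (fun x => ENNReal.ofReal (w x)) = Set.univ :=
    Set.eq_univ_of_forall fun x => ENNReal.ofReal_ne_zero_iff.mpr (hw₀ x)
  rw [wtMass, ← pos_iff_ne_zero, setLIntegral_pos_iff hw.ennreal_ofReal, hsupp,
    Set.univ_inter]
  exact pos_iff_ne_zero.mpr hE

theorem measurable_nuW {n m : ℕ} (p : ℝ) (pk : Fin m → ℝ) {w : Fin m → Rn n → ℝ}
    (hw : ∀ k, Measurable (w k)) : Measurable (nuW p pk w) :=
  Finset.measurable_prod _ fun k _ => (hw k).pow_const _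

theorem nuW_pos {n m : ℕ} (p : ℝ) (pk : Fin m → ℝ) {w : Fin m → Rn n → ℝ}
    (hw₀ : ∀ k x, 0 < w k x) (x : Rn n) : 0 < nuW p pk w x :=
  Finset.prod_pos fun k _ => Real.rpow_pos_of_pos (hw₀ k x) _

theorem multiAP_ball_Holder_general
    {n m : ℕ} (p : ℝ) (pk : Fin m → ℝ) (hpk : ∀ k, 1 ≤ pk k)
    (hp : 1/p = ∑ k, 1/pk k)
    (w : Fin m → Rn n → ℝ) (hw : ∀ k, IsWeight (w k))
    (y : Rn n) (r : ℝ) (hr : 0 < r) (CW : ℝ)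
    (hAP : ((volume (ball y r))⁻¹ * wtMass (nuW p pk w) (ball y r)) ^ (1/p) *
        (∏ k, apFactor (pk k) (w k) (ball y r)) ≤ ENNReal.ofReal CW) :
    ∀ f : Fin m → Rn n → ℝ, (∀ k, Measurable (f k)) →
      (∏ k, (volume (ball y r))⁻¹ * ∫⁻ x in ball y r, ENNReal.ofReal |f k x|) ≤
        ENNReal.ofReal CW * wtMass (nuW p pk w) (ball y r) ^ (-(1/p)) *
          ∏ k, (∫⁻ x in ball y r,
            ENNReal.ofReal |f k x| ^ pk k * ENNReal.ofReal (w k x)) ^ (1/pk k) := by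
  intro f hf
  have hwm (k : Fin m) : Measurable (w k) := (hw k).1
  have hw₀ (k : Fin m) : ∀ x, 0 < w k x := (hw k).2.1
  have hB₀ : volume (ball y r) ≠ 0 := (measure_ball_pos _ _ hr).ne'
  have hp₀ : 0 ≤ 1 / p := hp ▸ Finset.sum_nonneg fun k _ => by have := hpk k; positivity
  have hν : wtMass (nuW p pk w) (ball y r) ≠ 0 :=
    wtMass_ne_zero (measurable_nuW p pk hwm) (nuW_pos p pk hw₀) hB₀
  calc (∏ k, (volume (ball y r))⁻¹ * ∫⁻ x in ball y r, ENNReal.ofReal |f k x|)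
      ≤ volume (ball y r) ^ (-(1 / p)) * (∏ k, apFactor (pk k) (w k) (ball y r)) *
          ∏ k, wtLpOn (pk k) (w k) (ball y r) (f k) :=
        prod_average_abs_le hpk hp hwm hw₀ hf hB₀ measure_ball_lt_top.ne
    _ ≤ ENNReal.ofReal CW * wtMass (nuW p pk w) (ball y r) ^ (-(1 / p)) *
          ∏ k, wtLpOn (pk k) (w k) (ball y r) (f k) := by
        gcongr ?_ * _
        exact ENNReal.rpow_neg_mul_le_mul_rpow_neg hp₀ hν ENNReal.ofReal_ne_top hAP

/-- the multilinear `A_{P⃗}` condition on a single ball yields the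
multilinear Hölder-type estimate for averages on that ball. -/
theorem multiAP_ball_Holder
    {n m : ℕ} (hm : 1 ≤ m) (p : ℝ) (pk : Fin m → ℝ) (hpk : ∀ k, 1 ≤ pk k)
    (hp : 1/p = ∑ k, 1/pk k)
    (w : Fin m → Rn n → ℝ) (hw : ∀ k, IsWeight (w k))
    (hwdual : ∀ k, pk k > 1 → LocallyIntegrable (fun x => w k x ^ (-(1/(pk k - 1)))) volume)
    (y : Rn n) (r : ℝ) (hr : 0 < r) (CW : ℝ)
    (hAP : ((volume (ball y r))⁻¹ * wtMass (nuW p pk w) (ball y r)) ^ (1/p) *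
        (∏ k, apFactor (pk k) (w k) (ball y r)) ≤ ENNReal.ofReal CW) :
    ∀ f : Fin m → Rn n → ℝ, (∀ k, Measurable (f k)) →
      (∏ k, (volume (ball y r))⁻¹ * ∫⁻ x in ball y r, ENNReal.ofReal |f k x|) ≤
        ENNReal.ofReal CW * wtMass (nuW p pk w) (ball y r) ^ (-(1/p)) *
          ∏ k, (∫⁻ x in ball y r,
            ENNReal.ofReal |f k x| ^ pk k * ENNReal.ofReal (w k x)) ^ (1/pk k) :=
  multiAP_ball_Holder_general p pk hpk hp w hw y r hr CW hAP
end
end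

section
/- Let m ≥ 1 and let w_1,…,w_m be weights on ℝ^n such that for some constant C and every ball B, (|B|^{−1}∫_B Π_{k=1}^m w_k^{1/m})^m ≤ C · Π_{k=1}^m essinf_B w_k (the multilinear A_{(1,…,1)} condition). Then there is a constant C′, depending only on C and m, such that: (a) the weight ν = Π_{k=1}^m w_k^{1/m} satisfies |B|^{−1}∫_B ν ≤ C′ · essinf_B ν for every ball B (i.e., ν ∈ A_1); and (b) for each k = 1,…,m, (|B|^{−1}∫_B w_k^{1/m})^m ≤ C′ · essinf_B w_k for every ball B (i.e., w_k^{1/m} ∈ A_1). -/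
open MeasureTheory Metric ENNReal

noncomputable section

/-!
Write `gₖ = wₖ^{1/m}`, `ν = ∏ₖ gₖ` and `eₖ = essinf_B gₖ`, so that `essinf_B wₖ = eₖ^m` and the
hypothesis reads `(⨍_B ν)^m ≤ C ∏ₖ eₖ^m`. Since `∏ₖ eₖ ≤ essinf_B ν`, taking `m`-th roots gives
`ν ∈ A₁` with constant `C^{1/m}`. For a fixed `k`, the bound `gₖ ∏_{j≠k} eⱼ ≤ ν` a.e. gives
`(⨍_B gₖ)^m (∏_{j≠k} eⱼ)^m ≤ C eₖ^m (∏_{j≠k} eⱼ)^m`, and the common factor can be cancelled because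
every `eⱼ` is positive (otherwise `⨍_B ν = 0`) and finite.
-/

section EssInf

variable {α ι : Type*} [MeasurableSpace α] {μ : Measure α}

theorem ENNReal.essInf_pow (f : α → ℝ≥0∞) {n : ℕ} (hn : n ≠ 0) :
    essInf f μ ^ n = essInf (fun x => f x ^ n) μ :=
  OrderIso.essInf_apply f μ (ENNReal.powOrderIso n hn)

theorem ENNReal.essInf_rpow_inv_natCast_pow (f : α → ℝ≥0∞) {n : ℕ} (hn : n ≠ 0) :
    essInf (fun x => f x ^ (n⁻¹ : ℝ)) μ ^ n = essInf f μ := by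
  simp only [ENNReal.essInf_pow _ hn, ENNReal.rpow_inv_natCast_pow hn]

theorem ae_prod_essInf_le (s : Finset ι) (f : ι → α → ℝ≥0∞) :
    ∀ᵐ x ∂μ, ∏ i ∈ s, essInf (f i) μ ≤ ∏ i ∈ s, f i x := by
  filter_upwards [(Filter.eventually_all_finset s).2 fun i _ => ae_essInf_le (f := f i)]
    with x hx
  exact Finset.prod_le_prod' hx

theorem prod_essInf_le_essInf_prod (s : Finset ι) (f : ι → α → ℝ≥0∞) :
    ∏ i ∈ s, essInf (f i) μ ≤ essInf (fun x => ∏ i ∈ s, f i x) μ :=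
  le_essInf_of_ae_le _ (ae_prod_essInf_le s f)

theorem essInf_ne_top_of_ne_top (hμ : μ ≠ 0) {f : α → ℝ≥0∞} (hf : ∀ x, f x ≠ ⊤) :
    essInf f μ ≠ ⊤ := by
  have : NeZero μ := ⟨hμ⟩
  obtain ⟨x, hx⟩ := (ae_essInf_le (f := f) (μ := μ)).exists
  exact ne_top_of_le_ne_top (hf x) hx

theorem lintegral_ne_zero_of_forall_ne_zero (hμ : μ ≠ 0) {f : α → ℝ≥0∞} (hf : AEMeasurable f μ)
    (hpos : ∀ x, f x ≠ 0) : ∫⁻ x, f x ∂μ ≠ 0 := by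
  have : NeZero μ := ⟨hμ⟩
  rw [Ne, lintegral_eq_zero_iff' hf]
  intro h0
  obtain ⟨x, hx⟩ := h0.exists
  exact hpos x hx

end EssInf

theorem ENNReal.rpow_le_max_one (a : ℝ≥0∞) {p : ℝ} (hp₀ : 0 ≤ p) (hp₁ : p ≤ 1) :
    a ^ p ≤ max a 1 := by
  rcases le_total a 1 with ha | ha
  · exact (ENNReal.rpow_le_one ha hp₀).trans (le_max_right _ _)
  · calc a ^ p ≤ a ^ (1 : ℝ) := ENNReal.rpow_le_rpow_of_exponent_le ha hp₁
      _ ≤ max a 1 := by rw [ENNReal.rpow_one]; exact le_max_left _ _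

section MultiA1

/- In the application `g i = wᵢ^{1/m}`, `μ` is Lebesgue measure restricted to a ball `B` and
`c = |B|⁻¹`, so that `h` below is the multilinear `A_{(1,…,1)}` condition on `B`. -/

variable {α ι : Type*} [MeasurableSpace α] [Fintype ι] {μ : Measure α} {g : ι → α → ℝ≥0∞}
  {c C : ℝ≥0∞} {m : ℕ}

theorem avg_prod_le_of_multiA1 (hm : m ≠ 0)
    (h : (c * ∫⁻ x, ∏ i, g i x ∂μ) ^ m ≤ C * ∏ i, essInf (g i) μ ^ m) :
    c * ∫⁻ x, ∏ i, g i x ∂μ ≤ C ^ (m⁻¹ : ℝ) * essInf (fun x => ∏ i, g i x) μ := by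
  rw [← ENNReal.pow_le_pow_left_iff hm]
  calc (c * ∫⁻ x, ∏ i, g i x ∂μ) ^ m ≤ C * (∏ i, essInf (g i) μ) ^ m := by
        rwa [← Finset.prod_pow]
    _ ≤ C * essInf (fun x => ∏ i, g i x) μ ^ m := by
        gcongr
        exact prod_essInf_le_essInf_prod _ _
    _ = (C ^ (m⁻¹ : ℝ) * essInf (fun x => ∏ i, g i x) μ) ^ m := by
        rw [mul_pow, ENNReal.rpow_inv_natCast_pow hm]

theorem essInf_ne_zero_of_multiA1 (hm : m ≠ 0) (hc : c ≠ 0) (hν : ∫⁻ x, ∏ i, g i x ∂μ ≠ 0)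
    (h : (c * ∫⁻ x, ∏ i, g i x ∂μ) ^ m ≤ C * ∏ i, essInf (g i) μ ^ m) (j : ι) :
    essInf (g j) μ ≠ 0 := by
  intro hj
  have hprod : ∏ i, essInf (g i) μ ^ m = 0 :=
    Finset.prod_eq_zero (Finset.mem_univ j) (by rw [hj, zero_pow hm])
  rw [hprod, mul_zero, nonpos_iff_eq_zero, pow_eq_zero_iff hm, mul_eq_zero] at h
  exact h.elim hc hν

theorem avg_pow_le_of_multiA1 (hm : m ≠ 0) (hc : c ≠ 0) (hν : ∫⁻ x, ∏ i, g i x ∂μ ≠ 0)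
    (htop : ∀ i, essInf (g i) μ ≠ ⊤)
    (h : (c * ∫⁻ x, ∏ i, g i x ∂μ) ^ m ≤ C * ∏ i, essInf (g i) μ ^ m) (k : ι) :
    (c * ∫⁻ x, g k x ∂μ) ^ m ≤ C * essInf (g k) μ ^ m := by
  classical
  set P := ∏ i ∈ Finset.univ.erase k, essInf (g i) μ
  have hP₀ : P ≠ 0 :=
    Finset.prod_ne_zero_iff.2 fun i _ => essInf_ne_zero_of_multiA1 hm hc hν h i
  have hP_top : P ≠ ⊤ := ENNReal.prod_ne_top fun i _ => htop i
  have hgk : (c * ∫⁻ x, g k x ∂μ) * P ≤ c * ∫⁻ x, ∏ i, g i x ∂μ := by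
    rw [mul_assoc, ← lintegral_mul_const' _ _ hP_top]
    gcongr c * ?_
    refine lintegral_mono_ae ((ae_prod_essInf_le (Finset.univ.erase k) g).mono fun x hx => ?_)
    rw [← Finset.mul_prod_erase _ _ (Finset.mem_univ k)]
    gcongr
  rw [← ENNReal.mul_le_mul_iff_left (pow_ne_zero m hP₀) (ENNReal.pow_ne_top hP_top)]
  calc (c * ∫⁻ x, g k x ∂μ) ^ m * P ^ m ≤ (c * ∫⁻ x, ∏ i, g i x ∂μ) ^ m := by
        rw [← mul_pow]
        gcongr
    _ ≤ C * ∏ i, essInf (g i) μ ^ m := h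
    _ = C * essInf (g k) μ ^ m * P ^ m := by
        rw [Finset.prod_pow, ← Finset.mul_prod_erase _ _ (Finset.mem_univ k), mul_pow, mul_assoc]

end MultiA1

section Weights

variable {n : ℕ}

theorem IsWeight.ofReal_rpow {w : Rn n → ℝ} (hw : IsWeight w) (p : ℝ) (x : Rn n) :
    ENNReal.ofReal (w x ^ p) = ENNReal.ofReal (w x) ^ p :=
  (ENNReal.ofReal_rpow_of_pos (hw.2.1 x)).symm

theorem ofReal_prod_rpow_of_isWeight {ι : Type*} [Fintype ι] {w : ι → Rn n → ℝ}
    (hw : ∀ k, IsWeight (w k)) (p : ℝ) (x : Rn n) :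
    ENNReal.ofReal (∏ k, w k x ^ p) = ∏ k, ENNReal.ofReal (w k x) ^ p := by
  rw [ENNReal.ofReal_prod_of_nonneg fun k _ => (Real.rpow_pos_of_pos ((hw k).2.1 x) p).le]
  exact Finset.prod_congr rfl fun k _ => (hw k).ofReal_rpow p x

theorem lintegral_prod_ofReal_rpow_ne_zero {ι : Type*} [Fintype ι] {w : ι → Rn n → ℝ}
    (hw : ∀ k, IsWeight (w k)) {μ : Measure (Rn n)} (hμ : μ ≠ 0) (p : ℝ) :
    ∫⁻ x, ∏ k, ENNReal.ofReal (w k x) ^ p ∂μ ≠ 0 := by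
  refine lintegral_ne_zero_of_forall_ne_zero hμ ?_ fun x => ?_
  · exact (Finset.measurable_prod _ fun k _ =>
      (hw k).1.ennreal_ofReal.pow_const _).aemeasurable
  · exact Finset.prod_ne_zero_iff.2 fun k _ =>
      (ENNReal.rpow_pos (ENNReal.ofReal_pos.2 ((hw k).2.1 x)) ENNReal.ofReal_ne_top).ne'

end Weights

/-- the multilinear `A_{(1,…,1)}` condition implies `ν = ∏_k w_k^{1/m} ∈ A_1`
and `w_k^{1/m} ∈ A_1` for each `k`, with a constant depending only on `C` and `m`. -/
theorem multiA1_implies_A1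
    {n m : ℕ} (hm : 1 ≤ m)
    (w : Fin m → Rn n → ℝ) (hw : ∀ k, IsWeight (w k)) (C : ℝ)
    (hA : ∀ (y : Rn n) (r : ℝ), 0 < r →
      ((volume (ball y r))⁻¹ *
          ∫⁻ x in ball y r, ENNReal.ofReal (∏ k, w k x ^ ((1:ℝ)/(m:ℝ)))) ^ (m:ℕ)
        ≤ ENNReal.ofReal C *
            ∏ k, essInf (fun x => ENNReal.ofReal (w k x)) (volume.restrict (ball y r))) :
    ∃ C' : ℝ, 0 < C' ∧
      (∀ (y : Rn n) (r : ℝ), 0 < r →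
        (volume (ball y r))⁻¹ *
            (∫⁻ x in ball y r, ENNReal.ofReal (∏ k, w k x ^ ((1:ℝ)/(m:ℝ)))) ≤
          ENNReal.ofReal C' *
            essInf (fun x => ENNReal.ofReal (∏ k, w k x ^ ((1:ℝ)/(m:ℝ))))
              (volume.restrict (ball y r))) ∧
      (∀ k, ∀ (y : Rn n) (r : ℝ), 0 < r →
        ((volume (ball y r))⁻¹ *
            ∫⁻ x in ball y r, ENNReal.ofReal (w k x ^ ((1:ℝ)/(m:ℝ)))) ^ (m:ℕ) ≤
          ENNReal.ofReal C' *
            essInf (fun x => ENNReal.ofReal (w k x)) (volume.restrict (ball y r))) := by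
  have hm₀ : m ≠ 0 := Nat.one_le_iff_ne_zero.1 hm
  have hessInf (k : Fin m) (μ : Measure (Rn n)) : essInf (fun x => ENNReal.ofReal (w k x)) μ =
      essInf (fun x => ENNReal.ofReal (w k x) ^ (m⁻¹ : ℝ)) μ ^ m :=
    (ENNReal.essInf_rpow_inv_natCast_pow _ hm₀).symm
  simp only [one_div, ofReal_prod_rpow_of_isWeight hw, (hw _).ofReal_rpow, hessInf] at hA ⊢
  have hμ : ∀ (y : Rn n) (r : ℝ), 0 < r → volume.restrict (ball y r) ≠ 0 := fun y r hr =>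
    Measure.restrict_eq_zero.not.2 (measure_ball_pos volume y hr).ne'
  refine ⟨max C 1, by positivity, fun y r hr => ?_, fun k y r hr => ?_⟩
  · calc _ ≤ ENNReal.ofReal C ^ (m⁻¹ : ℝ) * _ := avg_prod_le_of_multiA1 hm₀ (hA y r hr)
      _ ≤ _ := by
        rw [ENNReal.ofReal_max, ENNReal.ofReal_one]
        gcongr
        exact ENNReal.rpow_le_max_one _ (by positivity)
          (inv_le_one_of_one_le₀ (by exact_mod_cast hm))
  · have hessInf_ne_top (j : Fin m) :
        essInf (fun x => ENNReal.ofReal (w j x) ^ (m⁻¹ : ℝ)) (volume.restrict (ball y r)) ≠ ⊤ :=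
      essInf_ne_top_of_ne_top (hμ y r hr) fun x =>
        ENNReal.rpow_ne_top_of_nonneg (by positivity) ENNReal.ofReal_ne_top
    calc _ ≤ ENNReal.ofReal C * _ :=
          avg_pow_le_of_multiA1 hm₀ (ENNReal.inv_ne_zero.2 measure_ball_lt_top.ne)
            (lintegral_prod_ofReal_rpow_ne_zero hw (hμ y r hr) _) hessInf_ne_top (hA y r hr) k
      _ ≤ _ := by gcongr; exact le_max_left _ _
end
end

section
/- Let m ≥ 1, p_1,…,p_m ∈ [1,∞) with 1/p = Σ_{k=1}^m 1/p_k, and suppose each weight w_k satisfies the A_{p_k} condition with constant C_k: for every ball B, (|B|^{−1}∫_B w_k)^{1/p_k}·(|B|^{−1}∫_B w_k^{−p_k′/p_k})^{1/p_k′} ≤ C_k when p_k > 1 (with w_k^{−p_k′/p_k} locally integrable), and |B|^{−1}∫_B w_k ≤ C_k · essinf_B w_k when p_k = 1. Then the tuple (w_1,…,w_m) satisfies the multilinear A_{P⃗} condition with constant Π_{k=1}^m C_k: for every ball B, (|B|^{−1}∫_B ν)^{1/p} · Π_{k=1}^m D_k ≤ Π_{k=1}^m C_k, where ν = Π_k w_k^{p/p_k},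 D_k = (|B|^{−1}∫_B w_k^{−p_k′/p_k})^{1/p_k′} if p_k > 1 and D_k = (essinf_B w_k)^{−1} if p_k = 1. -/
open MeasureTheory Metric ENNReal

noncomputable section

/-! Since `∑ p / p_k = 1`, Hölder's inequality for the normalized measure on `B` with exponents
`p_k / p` gives `(⨍_B ν)^{1/p} ≤ ∏_k (⨍_B w_k)^{1/p_k}`. Multiplying by `∏_k D_k` and
bounding each `(⨍_B w_k)^{1/p_k} D_k` by `C_k` (for `p_k = 1` this is the `A_1` condition
divided by `essinf_B w_k`) gives the claim. -/

namespace MeasureTheory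

variable {α ι : Type*} [MeasurableSpace α] {μ : Measure α}

theorem laverage_prod_rpow_le (s : Finset ι) {f : ι → α → ℝ≥0∞}
    (hf : ∀ i ∈ s, AEMeasurable (f i) μ) {θ : ι → ℝ} (hθ : ∑ i ∈ s, θ i = 1)
    (hθ₀ : ∀ i ∈ s, 0 ≤ θ i) :
    ⨍⁻ x, ∏ i ∈ s, f i x ^ θ i ∂μ ≤ ∏ i ∈ s, (⨍⁻ x, f i x ∂μ) ^ θ i :=
  ENNReal.lintegral_prod_norm_pow_le s (fun i hi => (hf i hi).smul_measure _) hθ hθ₀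

theorem rpow_laverage_prod_rpow_div_le (s : Finset ι) {f : ι → α → ℝ≥0∞}
    (hf : ∀ i ∈ s, AEMeasurable (f i) μ) {p : ℝ} {q : ι → ℝ} (hp : 0 < p)
    (hq : ∀ i ∈ s, 0 ≤ q i) (hpq : 1 / p = ∑ i ∈ s, 1 / q i) :
    (⨍⁻ x, ∏ i ∈ s, f i x ^ (p / q i) ∂μ) ^ (1 / p) ≤
      ∏ i ∈ s, (⨍⁻ x, f i x ∂μ) ^ (1 / q i) := by
  have hθ : ∑ i ∈ s, p / q i = 1 := by
    simp_rw [div_eq_mul_one_div p, ← Finset.mul_sum, ← hpq]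
    exact mul_one_div_cancel hp.ne'
  calc (⨍⁻ x, ∏ i ∈ s, f i x ^ (p / q i) ∂μ) ^ (1 / p)
      ≤ (∏ i ∈ s, (⨍⁻ x, f i x ∂μ) ^ (p / q i)) ^ (1 / p) := by
        gcongr
        exact laverage_prod_rpow_le s hf hθ fun i hi => div_nonneg hp.le (hq i hi)
    _ = ∏ i ∈ s, (⨍⁻ x, f i x ∂μ) ^ (1 / q i) := by
        rw [← ENNReal.prod_rpow_of_nonneg (by positivity)]
        refine Finset.prod_congr rfl fun i _ => ?_
        rw [← ENNReal.rpow_mul]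
        congr 1
        field_simp

end MeasureTheory

theorem ENNReal.prod_ofReal_le_ofReal_prod {ι : Type*} (s : Finset ι) (f : ι → ℝ) :
    ∏ i ∈ s, ENNReal.ofReal (f i) ≤ ENNReal.ofReal (∏ i ∈ s, f i) := by
  by_cases hf : ∀ i ∈ s, 0 ≤ f i
  · rw [ENNReal.ofReal_prod_of_nonneg hf]
  · obtain ⟨i, hi, hfi⟩ := not_forall₂.mp hf
    rw [Finset.prod_eq_zero hi (ENNReal.ofReal_of_nonpos (not_le.mp hfi).le)]
    exact zero_le

theorem inv_volume_mul_wtMass {n : ℕ} (w : Rn n → ℝ) (B : Set (Rn n)) :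
    (volume B)⁻¹ * wtMass w B = ⨍⁻ x in B, ENNReal.ofReal (w x) ∂volume := by
  rw [setLAverage_eq, ENNReal.div_eq_inv_mul, wtMass]

theorem ofReal_nuW {n m : ℕ} (p : ℝ) (pk : Fin m → ℝ) {w : Fin m → Rn n → ℝ}
    (hw : ∀ k x, 0 < w k x) (x : Rn n) :
    ENNReal.ofReal (nuW p pk w x) = ∏ k, ENNReal.ofReal (w k x) ^ (p / pk k) := by
  rw [nuW, ENNReal.ofReal_prod_of_nonneg fun k _ => Real.rpow_nonneg (hw k x).le _]
  exact Finset.prod_congr rfl fun k _ => (ENNReal.ofReal_rpow_of_pos (hw k x)).symm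

theorem avg_rpow_mul_apFactor_le {n : ℕ} {q : ℝ} {w : Rn n → ℝ} {B : Set (Rn n)} {C : ℝ}
    (h : if q = 1 then
        (volume B)⁻¹ * wtMass w B ≤
          ENNReal.ofReal C * essInf (fun x => ENNReal.ofReal (w x)) (volume.restrict B)
      else ((volume B)⁻¹ * wtMass w B) ^ (1 / q) * apFactor q w B ≤ ENNReal.ofReal C) :
    ((volume B)⁻¹ * wtMass w B) ^ (1 / q) * apFactor q w B ≤ ENNReal.ofReal C := by
  split_ifs at h with hq
  · rw [apFactor, if_pos hq, hq, div_one, ENNReal.rpow_one, ← div_eq_mul_inv]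
    exact ENNReal.div_le_of_le_mul h
  · exact h

theorem product_Ap_implies_multiAP_general
    {n m : ℕ} (hm : 1 ≤ m) (p : ℝ) (pk : Fin m → ℝ) (hpk : ∀ k, 1 ≤ pk k)
    (hp : 1/p = ∑ k, 1/pk k)
    (w : Fin m → Rn n → ℝ) (hw : ∀ k, IsWeight (w k))
    (Ck : Fin m → ℝ)
    (hAk : ∀ k, ∀ (y : Rn n) (r : ℝ), 0 < r →
      if pk k = 1 then
        (volume (ball y r))⁻¹ * wtMass (w k) (ball y r) ≤
          ENNReal.ofReal (Ck k) *
            essInf (fun x => ENNReal.ofReal (w k x)) (volume.restrict (ball y r))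
      else
        ((volume (ball y r))⁻¹ * wtMass (w k) (ball y r)) ^ (1/pk k) *
          apFactor (pk k) (w k) (ball y r) ≤ ENNReal.ofReal (Ck k)) :
    ∀ (y : Rn n) (r : ℝ), 0 < r →
      ((volume (ball y r))⁻¹ * wtMass (nuW p pk w) (ball y r)) ^ (1/p) *
        (∏ k, apFactor (pk k) (w k) (ball y r)) ≤ ENNReal.ofReal (∏ k, Ck k) := by
  intro y r hr
  have hp₀ : 0 < p := by
    have : Nonempty (Fin m) := Fin.pos_iff_nonempty.mp hm
    rw [← one_div_pos, hp]
    exact Finset.sum_pos (fun k _ => one_div_pos.mpr (one_pos.trans_le (hpk k)))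
      Finset.univ_nonempty
  have hHolder : ((volume (ball y r))⁻¹ * wtMass (nuW p pk w) (ball y r)) ^ (1 / p) ≤
      ∏ k, ((volume (ball y r))⁻¹ * wtMass (w k) (ball y r)) ^ (1 / pk k) := by
    simp only [inv_volume_mul_wtMass, ofReal_nuW p pk (fun k => (hw k).2.1)]
    exact rpow_laverage_prod_rpow_div_le _ (fun k _ => (hw k).1.ennreal_ofReal.aemeasurable)
      hp₀ (fun k _ => zero_le_one.trans (hpk k)) hp
  calc ((volume (ball y r))⁻¹ * wtMass (nuW p pk w) (ball y r)) ^ (1 / p) *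
        ∏ k, apFactor (pk k) (w k) (ball y r)
      ≤ ∏ k, ((volume (ball y r))⁻¹ * wtMass (w k) (ball y r)) ^ (1 / pk k) *
          apFactor (pk k) (w k) (ball y r) := by
        rw [Finset.prod_mul_distrib]
        gcongr
    _ ≤ ∏ k, ENNReal.ofReal (Ck k) :=
        Finset.prod_le_prod' fun k _ => avg_rpow_mul_apFactor_le (hAk k y r hr)
    _ ≤ ENNReal.ofReal (∏ k, Ck k) := ENNReal.prod_ofReal_le_ofReal_prod _ _

/-- if each `w_k ∈ A_{p_k}` with constant `C_k`, then `(w_1,…,w_m)` satisfies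
the multilinear `A_{P⃗}` condition with constant `∏_k C_k`. -/
theorem product_Ap_implies_multiAP
    {n m : ℕ} (hm : 1 ≤ m) (p : ℝ) (pk : Fin m → ℝ) (hpk : ∀ k, 1 ≤ pk k)
    (hp : 1/p = ∑ k, 1/pk k)
    (w : Fin m → Rn n → ℝ) (hw : ∀ k, IsWeight (w k))
    (hwdual : ∀ k, pk k > 1 → LocallyIntegrable (fun x => w k x ^ (-(1/(pk k - 1)))) volume)
    (Ck : Fin m → ℝ)
    (hAk : ∀ k, ∀ (y : Rn n) (r : ℝ), 0 < r →
      if pk k = 1 then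
        (volume (ball y r))⁻¹ * wtMass (w k) (ball y r) ≤
          ENNReal.ofReal (Ck k) *
            essInf (fun x => ENNReal.ofReal (w k x)) (volume.restrict (ball y r))
      else
        ((volume (ball y r))⁻¹ * wtMass (w k) (ball y r)) ^ (1/pk k) *
          apFactor (pk k) (w k) (ball y r) ≤ ENNReal.ofReal (Ck k)) :
    ∀ (y : Rn n) (r : ℝ), 0 < r →
      ((volume (ball y r))⁻¹ * wtMass (nuW p pk w) (ball y r)) ^ (1/p) *
        (∏ k, apFactor (pk k) (w k) (ball y r)) ≤ ENNReal.ofReal (∏ k, Ck k) :=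
  product_Ap_implies_multiAP_general hm p pk hpk hp w hw Ck hAk
end
end

section
/- Let m ≥ 1, s ∈ (1,∞) with conjugate exponent s′ = s/(s−1), let B be a ball in ℝ^n, let ν be a weight satisfying the reverse Hölder inequality (|B|^{−1}∫_B ν^s)^{1/s} ≤ C₀ · |B|^{−1}∫_B ν on B, and let b be locally integrable with (|B|^{−1}∫_B |b − b_B|^t)^{1/t} ≤ M, where t = max{1, s′/m}. Then (∫_B |b(x) − b_B|^{1/m} ν(x) dx)^m ≤ C₀^m · M · ν(B)^m. -/
open MeasureTheory Metric ENNReal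

noncomputable section

/-! Hölder's inequality with the exponents `s' = s/(s-1)` and `s` bounds the average of
`|b - b_B|^{1/m} ν` over `B` by the `L^{s'/m}` average of `b - b_B` times the `L^s` average of `ν`.
Since `s'/m ≤ t`, the first factor is at most `M^{1/m}` (averages of `L^p` norms increase with
`p`), and by reverse Hölder the second is at most `C₀` times the average of `ν`. Raising to the
power `m` gives the claim. -/

open ProbabilityTheory

theorem lintegral_rpow_mul_le_of_reverse_holder {α : Type*} [MeasurableSpace α] {P : Measure α}
    [IsProbabilityMeasure P] {G w : α → ℝ≥0∞} (hG : AEMeasurable G P) (hw : AEMeasurable w P)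
    {a s s' t : ℝ} {C M : ℝ≥0∞} (ha : 0 < a) (hss' : s'.HolderConjugate s) (ht : s' * a ≤ t)
    (hGM : (∫⁻ x, G x ^ t ∂P) ^ (1 / t) ≤ M)
    (hwC : (∫⁻ x, w x ^ s ∂P) ^ (1 / s) ≤ C * ∫⁻ x, w x ∂P) :
    ∫⁻ x, G x ^ a * w x ∂P ≤ M ^ a * (C * ∫⁻ x, w x ∂P) := by
  have hs'a : 0 < s' * a := mul_pos hss'.pos ha
  have hG_mono : (∫⁻ x, G x ^ (s' * a) ∂P) ^ (1 / (s' * a)) ≤ (∫⁻ x, G x ^ t ∂P) ^ (1 / t) := by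
    simpa only [eLpNorm'_eq_lintegral_enorm, enorm_eq_self] using
      eLpNorm'_le_eLpNorm'_of_exponent_le hs'a ht P hG.aestronglyMeasurable
  calc ∫⁻ x, G x ^ a * w x ∂P
      ≤ (∫⁻ x, (G x ^ a) ^ s' ∂P) ^ (1 / s') * (∫⁻ x, w x ^ s ∂P) ^ (1 / s) :=
        lintegral_mul_le_Lp_mul_Lq P hss' (hG.pow_const a) hw
    _ = ((∫⁻ x, G x ^ (s' * a) ∂P) ^ (1 / (s' * a))) ^ a * (∫⁻ x, w x ^ s ∂P) ^ (1 / s) := by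
        simp_rw [← ENNReal.rpow_mul, mul_comm a s']
        congr 2
        field_simp
    _ ≤ M ^ a * (C * ∫⁻ x, w x ∂P) := by
        gcongr
        exact hG_mono.trans hGM

section SetAverage

variable {α : Type*} [MeasurableSpace α] {μ : Measure α} {S : Set α}

theorem inv_mul_setLIntegral_eq_lintegral_cond (f : α → ℝ≥0∞) :
    (μ S)⁻¹ * ∫⁻ x in S, f x ∂μ = ∫⁻ x, f x ∂μ[|S] := by
  rw [ProbabilityTheory.cond, lintegral_smul_measure, smul_eq_mul]

theorem setLIntegral_eq_mul_lintegral_cond (hS0 : μ S ≠ 0) (hS : μ S ≠ ∞) (f : α → ℝ≥0∞) :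
    ∫⁻ x in S, f x ∂μ = μ S * ∫⁻ x, f x ∂μ[|S] := by
  rw [← inv_mul_setLIntegral_eq_lintegral_cond, ← mul_assoc, ENNReal.mul_inv_cancel hS0 hS,
    one_mul]

theorem setLIntegral_rpow_mul_le_of_reverse_holder (hS0 : μ S ≠ 0) (hS : μ S ≠ ∞)
    {G w : α → ℝ≥0∞} (hG : AEMeasurable G (μ.restrict S)) (hw : AEMeasurable w (μ.restrict S))
    {a s s' t : ℝ} {C M : ℝ≥0∞} (ha : 0 < a) (hss' : s'.HolderConjugate s) (ht : s' * a ≤ t)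
    (hGM : ((μ S)⁻¹ * ∫⁻ x in S, G x ^ t ∂μ) ^ (1 / t) ≤ M)
    (hwC : ((μ S)⁻¹ * ∫⁻ x in S, w x ^ s ∂μ) ^ (1 / s) ≤
      C * ((μ S)⁻¹ * ∫⁻ x in S, w x ∂μ)) :
    ∫⁻ x in S, G x ^ a * w x ∂μ ≤ M ^ a * (C * ∫⁻ x in S, w x ∂μ) := by
  have : IsProbabilityMeasure μ[|S] := cond_isProbabilityMeasure_of_finite hS0 hS
  simp only [inv_mul_setLIntegral_eq_lintegral_cond] at hGM hwC
  simp only [setLIntegral_eq_mul_lintegral_cond hS0 hS]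
  calc μ S * ∫⁻ x, G x ^ a * w x ∂μ[|S]
      ≤ μ S * (M ^ a * (C * ∫⁻ x, w x ∂μ[|S])) := by
        gcongr
        exact lintegral_rpow_mul_le_of_reverse_holder (P := μ[|S])
          (hG.smul_measure _) (hw.smul_measure _) ha hss' ht hGM hwC
    _ = M ^ a * (C * (μ S * ∫⁻ x, w x ∂μ[|S])) := by ring

end SetAverage

theorem ofReal_pow_mul_ofReal_le (C M : ℝ) (m : ℕ) :
    ENNReal.ofReal C ^ m * ENNReal.ofReal M ≤ ENNReal.ofReal (C ^ m * M) := by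
  rcases le_or_gt 0 C with hC | hC
  · rw [← ENNReal.ofReal_pow hC, ← ENNReal.ofReal_mul (pow_nonneg hC m)]
  rcases m.eq_zero_or_pos with rfl | hm
  · simp
  · simp [ENNReal.ofReal_of_nonpos hC.le, zero_pow hm.ne']

/-- under a reverse Hölder inequality for `ν` on the ball `B` and an
`L^t` oscillation bound for `b` with `t = max{1, s'/m}`,
`(∫_B |b − b_B|^{1/m} ν)^m ≤ C₀^m M ν(B)^m`. -/
theorem oscillation_power_weighted_bound
    {n m : ℕ} (hm : 1 ≤ m) (s : ℝ) (hs : 1 < s)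
    (y : Rn n) (r : ℝ) (hr : 0 < r)
    (ν : Rn n → ℝ) (hν : IsWeight ν) (C₀ : ℝ)
    (hRH : ((volume (ball y r))⁻¹ * ∫⁻ x in ball y r, ENNReal.ofReal (ν x ^ s)) ^ (1/s) ≤
      ENNReal.ofReal C₀ * ((volume (ball y r))⁻¹ * wtMass ν (ball y r)))
    (b : Rn n → ℝ) (hb : LocallyIntegrable b volume) (M : ℝ)
    (hbM : ((volume (ball y r))⁻¹ *
        ∫⁻ x in ball y r,
          ENNReal.ofReal (|b x - ballAvg b y r| ^ (max 1 ((s/(s-1))/(m:ℝ))))) ^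
          (1 / max 1 ((s/(s-1))/(m:ℝ))) ≤ ENNReal.ofReal M) :
    (∫⁻ x in ball y r,
        ENNReal.ofReal (|b x - ballAvg b y r| ^ ((1:ℝ)/(m:ℝ))) * ENNReal.ofReal (ν x)) ^ (m:ℕ)
      ≤ ENNReal.ofReal (C₀ ^ m * M) * wtMass ν (ball y r) ^ (m:ℕ) := by
  have hB0 : volume (ball y r) ≠ 0 := (measure_ball_pos volume y hr).ne'
  have hm0 : m ≠ 0 := by omega
  have ha : (0 : ℝ) < 1 / m := by positivity
  have hss' : (s / (s - 1)).HolderConjugate s := (Real.HolderConjugate.conjExponent hs).symm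
  have hb_rpow (p : ℝ) (hp : 0 ≤ p) (x : Rn n) :
      ENNReal.ofReal (|b x - ballAvg b y r| ^ p) = ENNReal.ofReal |b x - ballAvg b y r| ^ p :=
    (ENNReal.ofReal_rpow_of_nonneg (abs_nonneg _) hp).symm
  simp only [hb_rpow _ (zero_le_one.trans (le_max_left _ _))] at hbM
  simp only [← ENNReal.ofReal_rpow_of_nonneg (hν.2.1 _).le (zero_le_one.trans hs.le)] at hRH
  simp only [hb_rpow _ ha.le]
  have key := setLIntegral_rpow_mul_le_of_reverse_holder hB0 measure_ball_lt_top.ne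
    (hb.aestronglyMeasurable.aemeasurable.sub_const _).abs.ennreal_ofReal.restrict
    hν.1.ennreal_ofReal.aemeasurable ha hss' (by rw [mul_one_div]; exact le_max_right _ _) hbM hRH
  calc (∫⁻ x in ball y r, ENNReal.ofReal |b x - ballAvg b y r| ^ (1 / (m : ℝ)) *
        ENNReal.ofReal (ν x)) ^ m
      ≤ (ENNReal.ofReal M ^ (1 / (m : ℝ)) * (ENNReal.ofReal C₀ * wtMass ν (ball y r))) ^ m := by
        gcongr
        exact key
    _ = ENNReal.ofReal C₀ ^ m * ENNReal.ofReal M * wtMass ν (ball y r) ^ m := by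
        simp only [mul_pow, one_div, ENNReal.rpow_inv_natCast_pow hm0]
        ring
    _ ≤ ENNReal.ofReal (C₀ ^ m * M) * wtMass ν (ball y r) ^ m := by
        gcongr
        exact ofReal_pow_mul_ofReal_le C₀ M m
end
end
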